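/- arXiv:2511.10132 — 9 statements merged into one kernel-verified Lean document; each statement's English description precedes it below -/
import Mathlib

section
/- Representation of solutions of the chain recursion by the coefficients (Lemma 4.3, point 1, existence part): Let (p₀,k₀) ∈ Q. Let Z and V be real-valued functions on {(p,k) ∈ Q : k ≥ k₀} such that for every (p,k) ∈ Q with k ≥ k₀, V(p,k) = Z(p,k) + Σ_{p'∈P} Σ_{k'∈D_{p'}, k₀ ≤ k' < k} a^p_{p'} h^p_{p'}(k−k') V(p',k') (a finite sum). Then for every (p,k) ∈ Q with k ≥ k₀, V(p,k) = Σ_{p'∈P} Σ_{k'∈D_{p'}, k₀ ≤ k' ≤ k} c(p,k;p',k') Z(p',k'). -/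
/-!
Regard the nodes `(p, k)` as points of `P × ℝ` carrying the time `k`. Above `k₀` every node has
only finitely many predecessors, so one may induct along time. Substituting the representation of
the earlier values `V p' k'` into the recursion for `V p k` and exchanging the two finite sums,
the coefficient of `Z p'' k''` with `k'' < k` is exactly the sum defining `c(p,k;p'',k'')`, while
the nodes at time `k` contribute only `c(p,k;p,k) Z p k = Z p k`.
-/

open Set

section Volterra

variable {Q : Type*} {G : Set Q} {t : Q → ℝ}

theorem finite_inter_preimage_Ico (hG : ∀ u v, (G ∩ t ⁻¹' Icc u v).Finite) (u v : ℝ) :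
    (G ∩ t ⁻¹' Ico u v).Finite :=
  (hG u v).subset (inter_subset_inter_right _ (preimage_mono Ico_subset_Icc_self))

theorem induction_on_finite_windows (hG : ∀ u v, (G ∩ t ⁻¹' Icc u v).Finite) (k₀ : ℝ)
    {motive : Q → Prop}
    (step : ∀ x ∈ G, k₀ ≤ t x → (∀ y ∈ G, k₀ ≤ t y → t y < t x → motive y) → motive x) :
    ∀ x ∈ G, k₀ ≤ t x → motive x := by
  intro x
  induction x using (measure fun x => (G ∩ t ⁻¹' Ico k₀ (t x)).ncard).wf.induction with
  | _ x ih =>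
  intro hx hkx
  refine step x hx hkx fun y hy hky hyx =>
    ih y (ncard_lt_ncard ?_ (finite_inter_preimage_Ico hG _ _)) hy hky
  refine (ssubset_iff_of_subset ?_).2 ⟨y, ⟨hy, hky, hyx⟩, fun hy' => lt_irrefl _ hy'.2.2⟩
  exact fun z ⟨hz, hkz, hzy⟩ => ⟨hz, hkz, hzy.trans hyx⟩

theorem finsum_mem_Ico_Icc_comm {M : Type*} [AddCommMonoid M]
    (hG : ∀ u v, (G ∩ t ⁻¹' Icc u v).Finite) (a b : ℝ) (F : Q → Q → M) :
    ∑ᶠ z ∈ G ∩ t ⁻¹' Ico a b, ∑ᶠ y ∈ G ∩ t ⁻¹' Icc a (t z), F z y =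
      ∑ᶠ y ∈ G ∩ t ⁻¹' Ico a b, ∑ᶠ z ∈ G ∩ t ⁻¹' Ico (t y) b, F z y := by
  simp only [finsum_mem_eq_finite_toFinset_sum _ (finite_inter_preimage_Ico hG _ _),
    finsum_mem_eq_finite_toFinset_sum _ (hG _ _)]
  refine Finset.sum_comm' fun z y => ?_
  simp only [Finite.mem_toFinset, mem_inter_iff, mem_preimage, mem_Ico, mem_Icc]
  constructor
  · rintro ⟨⟨hz, haz, hzb⟩, hy, hay, hyz⟩
    exact ⟨⟨hz, hyz, hzb⟩, hy, hay, hyz.trans_lt hzb⟩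
  · rintro ⟨⟨hz, hyz, hzb⟩, hy, hay, -⟩
    exact ⟨⟨hz, hay.trans hyz, hzb⟩, hy, hay, hyz⟩

variable {c : Q → Q → ℝ}

theorem finsum_mem_Icc_eq_add_finsum_mem_Ico (hG : ∀ u v, (G ∩ t ⁻¹' Icc u v).Finite)
    (hc_self : ∀ x ∈ G, c x x = 1) (hc_ne : ∀ x ∈ G, ∀ y ∈ G, t y = t x → y ≠ x → c x y = 0)
    (f : Q → ℝ) {k₀ : ℝ} {x : Q} (hx : x ∈ G) (hkx : k₀ ≤ t x) :
    ∑ᶠ y ∈ G ∩ t ⁻¹' Icc k₀ (t x), c x y * f y =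
      f x + ∑ᶠ y ∈ G ∩ t ⁻¹' Ico k₀ (t x), c x y * f y := by
  have hx' : x ∈ G ∩ t ⁻¹' Icc k₀ (t x) := ⟨hx, hkx, le_rfl⟩
  rw [← insert_eq_of_mem hx', ← insert_sdiff_singleton,
    finsum_mem_insert _ (notMem_sdiff_of_mem (mem_singleton x)) ((hG _ _).subset sdiff_subset),
    hc_self x hx, one_mul]
  congr 1
  refine finsum_mem_inter_support_eq' _ _ _ fun y hy => ?_
  simp only [mem_sdiff, mem_inter_iff, mem_preimage, mem_Icc, mem_Ico, mem_singleton_iff]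
  constructor
  · rintro ⟨⟨hyG, hky, hyx⟩, hne⟩
    refine ⟨hyG, hky, hyx.lt_of_ne fun heq => hy ?_⟩
    exact mul_eq_zero_of_left (hc_ne x hx y hyG heq hne) _
  · rintro ⟨hyG, hky, hyx⟩
    exact ⟨⟨hyG, hky, hyx.le⟩, fun h => hyx.ne (congrArg t h)⟩

theorem eq_finsum_resolvent_mul (hG : ∀ u v, (G ∩ t ⁻¹' Icc u v).Finite) (A : Q → Q → ℝ)
    (hc_self : ∀ x ∈ G, c x x = 1) (hc_ne : ∀ x ∈ G, ∀ y ∈ G, t y = t x → y ≠ x → c x y = 0)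
    (hc_rec : ∀ x ∈ G, ∀ y ∈ G, t y < t x →
      c x y = ∑ᶠ z ∈ G ∩ t ⁻¹' Ico (t y) (t x), A x z * c z y)
    (k₀ : ℝ) (Z V : Q → ℝ)
    (hV : ∀ x ∈ G, k₀ ≤ t x → V x = Z x + ∑ᶠ z ∈ G ∩ t ⁻¹' Ico k₀ (t x), A x z * V z) :
    ∀ x ∈ G, k₀ ≤ t x → V x = ∑ᶠ y ∈ G ∩ t ⁻¹' Icc k₀ (t x), c x y * Z y := by
  refine induction_on_finite_windows hG k₀ fun x hx hkx ih => ?_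
  calc V x = Z x + ∑ᶠ z ∈ G ∩ t ⁻¹' Ico k₀ (t x),
        A x z * ∑ᶠ y ∈ G ∩ t ⁻¹' Icc k₀ (t z), c z y * Z y := by
        rw [hV x hx hkx]
        exact congrArg _ (finsum_mem_congr rfl fun z hz => by rw [ih z hz.1 hz.2.1 hz.2.2])
    _ = Z x + ∑ᶠ y ∈ G ∩ t ⁻¹' Ico k₀ (t x),
        (∑ᶠ z ∈ G ∩ t ⁻¹' Ico (t y) (t x), A x z * c z y) * Z y := by
        simp only [mul_finsum_mem, finsum_mem_mul, ← mul_assoc]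
        rw [finsum_mem_Ico_Icc_comm hG]
    _ = Z x + ∑ᶠ y ∈ G ∩ t ⁻¹' Ico k₀ (t x), c x y * Z y :=
        congrArg _ (finsum_mem_congr rfl fun y hy => by rw [hc_rec x hx y hy.1 hy.2.2])
    _ = ∑ᶠ y ∈ G ∩ t ⁻¹' Icc k₀ (t x), c x y * Z y :=
        (finsum_mem_Icc_eq_add_finsum_mem_Ico hG hc_self hc_ne Z hx hkx).symm

end Volterra

theorem finite_inter_Icc_of_finite_inter_Ioc {S : Set ℝ} (hS : ∀ u v, u < v → (S ∩ Ioc u v).Finite)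
    (u v : ℝ) : (S ∩ Icc u v).Finite :=
  (hS (min u v - 1) v (by linarith [min_le_right u v])).subset
    (inter_subset_inter_right _ fun _ hx => ⟨by linarith [min_le_left u v, hx.1], hx.2⟩)

section Chains

variable {P : Type*} {D : P → Set ℝ}

theorem finite_nodes_inter_preimage_Icc [Finite P] (hD : ∀ u v, ((⋃ p, D p) ∩ Icc u v).Finite)
    (u v : ℝ) : ({z : P × ℝ | z.2 ∈ D z.1} ∩ Prod.snd ⁻¹' Icc u v).Finite :=
  (finite_univ.prod (hD u v)).subset fun z ⟨hz, hzI⟩ => ⟨trivial, mem_iUnion.2 ⟨z.1, hz⟩, hzI⟩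

open Function in
theorem sum_finsum_mem_eq_finsum_mem_nodes [Fintype P] {M : Type*} [AddCommMonoid M] {I : Set ℝ}
    (hI : ((⋃ p, D p) ∩ I).Finite) (f : P → ℝ → M) :
    ∑ p, ∑ᶠ k ∈ D p ∩ I, f p k = ∑ᶠ z ∈ {z : P × ℝ | z.2 ∈ D z.1} ∩ Prod.snd ⁻¹' I, f z.1 z.2 := by
  have hunion : {z : P × ℝ | z.2 ∈ D z.1} ∩ Prod.snd ⁻¹' I = ⋃ p, Prod.mk p '' (D p ∩ I) := by
    ext ⟨p, k⟩
    simp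
  have hdisj : Pairwise (Disjoint on fun p => Prod.mk p '' (D p ∩ I)) := fun p q hpq =>
    disjoint_left.2 fun _ ⟨_, _, hk⟩ ⟨_, _, hk'⟩ => hpq (congrArg Prod.fst (hk'.trans hk.symm)).symm
  rw [hunion, finsum_mem_iUnion hdisj fun p =>
    (hI.subset (inter_subset_inter_left _ (subset_iUnion D p))).image _, finsum_eq_sum_of_fintype]
  exact Finset.sum_congr rfl fun p _ =>
    (finsum_mem_image (f := fun z => f z.1 z.2) (Prod.mk_right_injective p).injOn).symm

end Chains

theorem stmt_0_general
    {P : Type*} [Fintype P] [DecidableEq P]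
    (D : P → Set ℝ)
    (hfin : ∀ u v : ℝ, u < v → ((⋃ p, D p) ∩ Set.Ioc u v).Finite)
    (a : P → P → ℝ)
    (h : P → P → ℝ → ℝ)
    -- the coefficients `c(p,k;p',k')`, characterized by the well-founded recursion
    (co : P → ℝ → P → ℝ → ℝ)
    (hco_diag : ∀ p p' k, k ∈ D p → k ∈ D p' → co p k p' k = if p = p' then 1 else 0)
    (hco_rec : ∀ p k p' k', k ∈ D p → k' ∈ D p' → k' < k →
      co p k p' k' = ∑ p'' : P, ∑ᶠ k'' ∈ D p'' ∩ Set.Ico k' k,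
        a p p'' * h p p'' (k - k'') * co p'' k'' p' k')
    -- the data of the statement
    (k₀ : ℝ)
    (Z V : P → ℝ → ℝ)
    (hV : ∀ p k, k ∈ D p → k₀ ≤ k →
      V p k = Z p k + ∑ p' : P, ∑ᶠ k' ∈ D p' ∩ Set.Ico k₀ k,
        a p p' * h p p' (k - k') * V p' k') :
    ∀ p k, k ∈ D p → k₀ ≤ k →
      V p k = ∑ p' : P, ∑ᶠ k' ∈ D p' ∩ Set.Icc k₀ k, co p k p' k' * Z p' k' := by
  have hIcc := finite_inter_Icc_of_finite_inter_Ioc hfin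
  have hsum : ∀ {I : Set ℝ} {u v : ℝ}, I ⊆ Icc u v → ∀ f : P → ℝ → ℝ,
      ∑ p, ∑ᶠ k ∈ D p ∩ I, f p k =
        ∑ᶠ z ∈ {z : P × ℝ | z.2 ∈ D z.1} ∩ Prod.snd ⁻¹' I, f z.1 z.2 := fun hI =>
    sum_finsum_mem_eq_finsum_mem_nodes ((hIcc _ _).subset (inter_subset_inter_right _ hI))
  intro p k hk hkk
  rw [hsum subset_rfl]
  refine eq_finsum_resolvent_mul (finite_nodes_inter_preimage_Icc hIcc)
    (fun x z => a x.1 z.1 * h x.1 z.1 (x.2 - z.2)) (c := fun x y => co x.1 x.2 y.1 y.2)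
    (fun x hx => by simp [hco_diag _ _ _ hx hx]) ?_ ?_ k₀ (fun z => Z z.1 z.2)
    (fun z => V z.1 z.2) ?_ (p, k) hk hkk
  · rintro ⟨p, k⟩ hk ⟨p', k'⟩ hk' (rfl : k' = k) hne
    exact (hco_diag p p' _ hk hk').trans (if_neg fun hp => hne (by rw [hp]))
  · rintro ⟨p, k⟩ hk ⟨p', k'⟩ hk' (hlt : k' < k)
    exact (hco_rec p k p' k' hk hk' hlt).trans (hsum Ico_subset_Icc_self _)
  · rintro ⟨p, k⟩ hk (hkk : k₀ ≤ k)
    exact (hV p k hk hkk).trans (congrArg _ (hsum Ico_subset_Icc_self _))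

/-- **Lemma 4.3, point 1 (existence part).**
Representation of solutions of the chain recursion by the coefficients. -/
theorem stmt_0
    {P : Type*} [Fintype P] [Nonempty P] [DecidableEq P]
    (n : P → ℕ) (hn : ∀ p, 1 ≤ n p)
    (θ : P → ℝ) (hθ0 : ∀ p, 0 ≤ θ p) (hθ1 : ∀ p, θ p < 1 / (n p : ℝ))
    (D : P → Set ℝ)
    (hD : ∀ p, D p = {k : ℝ | ∃ j : ℤ, k = θ p + (j : ℝ) / (n p : ℝ)})
    (hfin : ∀ u v : ℝ, u < v → ((⋃ p, D p) ∩ Set.Ioc u v).Finite)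
    (a : P → P → ℝ) (ha : ∀ p p', 0 ≤ a p p')
    (h : P → P → ℝ → ℝ) (hh : ∀ p p' x, 0 ≤ h p p' x)
    (hh0 : ∀ p p' x, x ≤ 0 → h p p' x = 0)
    -- the coefficients `c(p,k;p',k')`, characterized by the well-founded recursion
    (co : P → ℝ → P → ℝ → ℝ)
    (hco_nonneg : ∀ p k p' k', k ∈ D p → k' ∈ D p' → k' ≤ k → 0 ≤ co p k p' k')
    (hco_diag : ∀ p p' k, k ∈ D p → k ∈ D p' → co p k p' k = if p = p' then 1 else 0)
    (hco_rec : ∀ p k p' k', k ∈ D p → k' ∈ D p' → k' < k →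
      co p k p' k' = ∑ p'' : P, ∑ᶠ k'' ∈ D p'' ∩ Set.Ico k' k,
        a p p'' * h p p'' (k - k'') * co p'' k'' p' k')
    -- the data of the statement
    (p₀ : P) (k₀ : ℝ) (hk₀ : k₀ ∈ D p₀)
    (Z V : P → ℝ → ℝ)
    (hV : ∀ p k, k ∈ D p → k₀ ≤ k →
      V p k = Z p k + ∑ p' : P, ∑ᶠ k' ∈ D p' ∩ Set.Ico k₀ k,
        a p p' * h p p' (k - k') * V p' k') :
    ∀ p k, k ∈ D p → k₀ ≤ k →
      V p k = ∑ p' : P, ∑ᶠ k' ∈ D p' ∩ Set.Icc k₀ k, co p k p' k' * Z p' k' :=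
  stmt_0_general D hfin a h co hco_diag hco_rec k₀ Z V hV
end

section
/- Uniqueness of the coefficient family (Lemma 4.3, point 1, uniqueness part): Suppose c̃ assigns a real number c̃(p,k;p',k') to every pair (p,k),(p',k') ∈ Q with k' ≤ k, and that for every (p₀,k₀) ∈ Q and all real-valued functions Z, V on {(p,k) ∈ Q : k ≥ k₀} satisfying V(p,k) = Z(p,k) + Σ_{p'∈P} Σ_{k'∈D_{p'}, k₀ ≤ k' < k} a^p_{p'} h^p_{p'}(k−k') V(p',k') for all (p,k) ∈ Q with k ≥ k₀, one has V(p,k) = Σ_{p'∈P} Σ_{k'∈D_{p'}, k₀ ≤ k' ≤ k} c̃(p,k;p',k') Z(p',k') for all (p,k) ∈ Q with k ≥ k₀. Then c̃(p,k;p',k') = c(p,k;p',k') for all (p,k),(p',k') ∈ Q with k' ≤ k. -/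
/-! Feeding the recursion the unit impulse at `(p', k')` shows that the column `c(·,·;p',k')` of
the coefficient family is a solution started at `k₀ = k'`; the representation by `c̃` evaluates
that solution at `(p, k)` to `c̃(p,k;p',k')`. -/

theorem finsum_mem_ite_eq_of_mem {α M : Type*} [AddCommMonoid M] [DecidableEq α]
    {s : Set α} {a : α} (f : α → M) (ha : a ∈ s) :
    ∑ᶠ x ∈ s, (if x = a then f x else 0) = f a := by
  rw [finsum_mem_def, finsum_eq_single _ a, Set.indicator_of_mem ha, if_pos rfl]
  intro x hx
  simp [hx]

theorem sum_finsum_mem_mul_ite_eq {ι α R : Type*} [NonAssocSemiring R] [Fintype ι] [DecidableEq ι]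
    [DecidableEq α] (S : ι → Set α) (f : ι → α → R) {i : ι} {a : α} (ha : a ∈ S i) :
    ∑ j, ∑ᶠ x ∈ S j, f j x * (if j = i ∧ x = a then 1 else 0) = f i a := by
  rw [Finset.sum_eq_single i (fun j _ hj => by simp [hj]) (by simp)]
  simpa only [true_and, mul_ite, mul_one, mul_zero] using finsum_mem_ite_eq_of_mem (f i) ha

theorem coeff_column_eq_impulse_add {P : Type*} [Fintype P] [DecidableEq P] {D : P → Set ℝ}
    {a : P → P → ℝ} {h : P → P → ℝ → ℝ} {co : P → ℝ → P → ℝ → ℝ}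
    (hco_diag : ∀ p p' k, k ∈ D p → k ∈ D p' → co p k p' k = if p = p' then 1 else 0)
    (hco_rec : ∀ p k p' k', k ∈ D p → k' ∈ D p' → k' < k →
      co p k p' k' = ∑ p'' : P, ∑ᶠ k'' ∈ D p'' ∩ Set.Ico k' k,
        a p p'' * h p p'' (k - k'') * co p'' k'' p' k')
    {p' : P} {k' : ℝ} (hk' : k' ∈ D p') {q : P} {x : ℝ} (hx : x ∈ D q) (hle : k' ≤ x) :
    co q x p' k' = (if q = p' ∧ x = k' then 1 else 0) +
      ∑ p'' : P, ∑ᶠ k'' ∈ D p'' ∩ Set.Ico k' x, a q p'' * h q p'' (x - k'') * co p'' k'' p' k' := by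
  rcases hle.eq_or_lt with rfl | hlt
  · simp [hco_diag q p' k' hx hk']
  · rw [if_neg (fun hqx => hlt.ne' hqx.2), zero_add]
    exact hco_rec q x p' k' hx hk' hlt

theorem stmt_1_general
    {P : Type*} [Fintype P] [DecidableEq P]
    (D : P → Set ℝ)
    (a : P → P → ℝ)
    (h : P → P → ℝ → ℝ)
    -- the coefficients `c(p,k;p',k')`, characterized by the well-founded recursion
    (co : P → ℝ → P → ℝ → ℝ)
    (hco_diag : ∀ p p' k, k ∈ D p → k ∈ D p' → co p k p' k = if p = p' then 1 else 0)
    (hco_rec : ∀ p k p' k', k ∈ D p → k' ∈ D p' → k' < k →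
      co p k p' k' = ∑ p'' : P, ∑ᶠ k'' ∈ D p'' ∩ Set.Ico k' k,
        a p p'' * h p p'' (k - k'') * co p'' k'' p' k')
    -- a candidate family `c̃` which represents all solutions of the chain recursion
    (ctil : P → ℝ → P → ℝ → ℝ)
    (hctil : ∀ (p₀ : P) (k₀ : ℝ), k₀ ∈ D p₀ → ∀ Z V : P → ℝ → ℝ,
      (∀ p k, k ∈ D p → k₀ ≤ k →
        V p k = Z p k + ∑ p' : P, ∑ᶠ k' ∈ D p' ∩ Set.Ico k₀ k,
          a p p' * h p p' (k - k') * V p' k') →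
      ∀ p k, k ∈ D p → k₀ ≤ k →
        V p k = ∑ p' : P, ∑ᶠ k' ∈ D p' ∩ Set.Icc k₀ k, ctil p k p' k' * Z p' k') :
    ∀ p k p' k', k ∈ D p → k' ∈ D p' → k' ≤ k → ctil p k p' k' = co p k p' k' := by
  classical
  intro p k p' k' hk hk' hle
  have hrep := hctil p' k' hk' (fun q x => if q = p' ∧ x = k' then 1 else 0)
    (fun q x => co q x p' k')
    (fun q x hx hge => coeff_column_eq_impulse_add hco_diag hco_rec hk' hx hge) p k hk hle
  rw [sum_finsum_mem_mul_ite_eq (fun q => D q ∩ Set.Icc k' k) (ctil p k) ⟨hk', le_rfl, hle⟩]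
    at hrep
  exact hrep.symm

/-- **Lemma 4.3, point 1 (uniqueness part).**
Uniqueness of the coefficient family. -/
theorem stmt_1
    {P : Type*} [Fintype P] [Nonempty P] [DecidableEq P]
    (n : P → ℕ) (hn : ∀ p, 1 ≤ n p)
    (θ : P → ℝ) (hθ0 : ∀ p, 0 ≤ θ p) (hθ1 : ∀ p, θ p < 1 / (n p : ℝ))
    (D : P → Set ℝ)
    (hD : ∀ p, D p = {k : ℝ | ∃ j : ℤ, k = θ p + (j : ℝ) / (n p : ℝ)})
    (hfin : ∀ u v : ℝ, u < v → ((⋃ p, D p) ∩ Set.Ioc u v).Finite)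
    (a : P → P → ℝ) (ha : ∀ p p', 0 ≤ a p p')
    (h : P → P → ℝ → ℝ) (hh : ∀ p p' x, 0 ≤ h p p' x)
    (hh0 : ∀ p p' x, x ≤ 0 → h p p' x = 0)
    -- the coefficients `c(p,k;p',k')`, characterized by the well-founded recursion
    (co : P → ℝ → P → ℝ → ℝ)
    (hco_nonneg : ∀ p k p' k', k ∈ D p → k' ∈ D p' → k' ≤ k → 0 ≤ co p k p' k')
    (hco_diag : ∀ p p' k, k ∈ D p → k ∈ D p' → co p k p' k = if p = p' then 1 else 0)
    (hco_rec : ∀ p k p' k', k ∈ D p → k' ∈ D p' → k' < k →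
      co p k p' k' = ∑ p'' : P, ∑ᶠ k'' ∈ D p'' ∩ Set.Ico k' k,
        a p p'' * h p p'' (k - k'') * co p'' k'' p' k')
    -- a candidate family `c̃` which represents all solutions of the chain recursion
    (ctil : P → ℝ → P → ℝ → ℝ)
    (hctil : ∀ (p₀ : P) (k₀ : ℝ), k₀ ∈ D p₀ → ∀ Z V : P → ℝ → ℝ,
      (∀ p k, k ∈ D p → k₀ ≤ k →
        V p k = Z p k + ∑ p' : P, ∑ᶠ k' ∈ D p' ∩ Set.Ico k₀ k,
          a p p' * h p p' (k - k') * V p' k') →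
      ∀ p k, k ∈ D p → k₀ ≤ k →
        V p k = ∑ p' : P, ∑ᶠ k' ∈ D p' ∩ Set.Icc k₀ k, ctil p k p' k' * Z p' k') :
    ∀ p k p' k', k ∈ D p → k' ∈ D p' → k' ≤ k → ctil p k p' k' = co p k p' k' :=
  stmt_1_general D a h co hco_diag hco_rec ctil hctil
end

section
/- 1-periodicity of the coefficients (Lemma 4.3, point 2): For every (p,k),(p',k') ∈ Q with k' ≤ k and every integer n ∈ ℤ, one has k+n ∈ D_p and k'+n ∈ D_{p'}, and c(p,k+n;p',k'+n) = c(p,k;p',k'). -/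
/-!
Translating both arguments of `c` by an integer `m` maps every `D p` onto itself and leaves all
differences `k - k''` unchanged, so the translated coefficients solve the same recursion with the
same diagonal values. Since each `(⋃ p, D p) ∩ Ioc k' k` is finite, the recursion has at most one
solution: by strong induction on the number of its points, every `c(p,k;p',k')` is determined by
coefficients over strictly fewer points.
-/

open Set

lemma add_int_mem_progression {θ x : ℝ} {n : ℕ} (hn : n ≠ 0) (m : ℤ)
    (hx : x ∈ {k : ℝ | ∃ j : ℤ, k = θ + j / n}) :
    x + m ∈ {k : ℝ | ∃ j : ℤ, k = θ + j / n} := by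
  obtain ⟨j, rfl⟩ := hx
  refine ⟨j + m * n, ?_⟩
  push_cast
  field_simp
  ring

lemma add_int_mem_progression_iff {θ x : ℝ} {n : ℕ} (hn : n ≠ 0) (m : ℤ) :
    x + m ∈ {k : ℝ | ∃ j : ℤ, k = θ + j / n} ↔ x ∈ {k : ℝ | ∃ j : ℤ, k = θ + j / n} := by
  refine ⟨fun hx => ?_, add_int_mem_progression hn m⟩
  simpa using add_int_mem_progression hn (-m) hx

lemma finsum_mem_inter_Ico_add {S : Set ℝ} {t : ℝ} (hS : ∀ x, x + t ∈ S ↔ x ∈ S)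
    (u v : ℝ) (f : ℝ → ℝ) :
    ∑ᶠ x ∈ S ∩ Ico (u + t) (v + t), f x = ∑ᶠ x ∈ S ∩ Ico u v, f (x + t) := by
  have himage : (· + t) '' (S ∩ Ico u v) = S ∩ Ico (u + t) (v + t) := by
    rw [image_inter (add_left_injective t), image_add_const_Ico]
    congr 1
    ext x
    exact ⟨by rintro ⟨y, hy, rfl⟩; exact (hS y).2 hy,
      fun hx => ⟨x - t, (hS _).1 (by simpa using hx), by simp⟩⟩
  rw [← himage, finsum_mem_image (add_left_injective t).injOn]

lemma ncard_inter_Ioc_lt {A : Set ℝ} {u w v : ℝ} (hfin : (A ∩ Ioc u v).Finite)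
    (hv : v ∈ A) (huv : u < v) (hwv : w < v) :
    (A ∩ Ioc u w).ncard < (A ∩ Ioc u v).ncard := by
  refine ncard_lt_ncard ⟨inter_subset_inter_right _ (Ioc_subset_Ioc_right hwv.le), ?_⟩ hfin
  intro hsub
  exact absurd (hsub ⟨hv, huv, le_rfl⟩).2.2 (not_le.2 hwv)

section Recursion

variable {P : Type*} [Fintype P]

def SolvesRecursion (D : P → Set ℝ) (K : P → P → ℝ → ℝ) (c : P → ℝ → P → ℝ → ℝ) : Prop :=
  ∀ p k p' k', k ∈ D p → k' ∈ D p' → k' < k →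
    c p k p' k' = ∑ p'' : P, ∑ᶠ k'' ∈ D p'' ∩ Ico k' k, K p p'' (k - k'') * c p'' k'' p' k'

lemma SolvesRecursion.comp_add {D : P → Set ℝ} {K : P → P → ℝ → ℝ} {c : P → ℝ → P → ℝ → ℝ}
    (hc : SolvesRecursion D K c) {t : ℝ} (hD : ∀ p x, x + t ∈ D p ↔ x ∈ D p) :
    SolvesRecursion D K (fun p k p' k' => c p (k + t) p' (k' + t)) := by
  intro p k p' k' hk hk' hlt
  beta_reduce
  rw [hc p _ p' _ ((hD p k).2 hk) ((hD p' k').2 hk') (by linarith)]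
  refine Finset.sum_congr rfl fun p'' _ => ?_
  rw [finsum_mem_inter_Ico_add (hD p'')]
  simp only [add_sub_add_right_eq_sub]

lemma SolvesRecursion.eq {D : P → Set ℝ}
    (hfin : ∀ u v : ℝ, u < v → ((⋃ p, D p) ∩ Ioc u v).Finite) {K : P → P → ℝ → ℝ}
    {c c' : P → ℝ → P → ℝ → ℝ} (hc : SolvesRecursion D K c) (hc' : SolvesRecursion D K c')
    (hdiag : ∀ p p' k, k ∈ D p → k ∈ D p' → c p k p' k = c' p k p' k) :
    ∀ p k p' k', k ∈ D p → k' ∈ D p' → k' ≤ k → c p k p' k' = c' p k p' k' := by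
  suffices ∀ N p k p' k', ((⋃ q, D q) ∩ Ioc k' k).ncard = N →
      k ∈ D p → k' ∈ D p' → k' ≤ k → c p k p' k' = c' p k p' k' from
    fun p k p' k' => this _ p k p' k' rfl
  intro N
  induction N using Nat.strong_induction_on with
  | _ N ih =>
    intro p k p' k' hN hk hk' hle
    rcases hle.eq_or_lt with rfl | hlt
    · exact hdiag p p' k' hk hk'
    rw [hc p k p' k' hk hk' hlt, hc' p k p' k' hk hk' hlt]
    refine Finset.sum_congr rfl fun p'' _ => finsum_mem_congr rfl fun x ⟨hx, hk'x, hxk⟩ => ?_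
    have hfewer := ncard_inter_Ioc_lt (hfin k' k hlt) (mem_iUnion_of_mem p hk) hlt hxk
    rw [ih _ (hN ▸ hfewer) p'' x p' k' rfl hx hk' hk'x]

end Recursion

theorem stmt_2_general
    {P : Type*} [Fintype P] [DecidableEq P]
    (n : P → ℕ) (hn : ∀ p, 1 ≤ n p)
    (θ : P → ℝ)
    (D : P → Set ℝ)
    (hD : ∀ p, D p = {k : ℝ | ∃ j : ℤ, k = θ p + (j : ℝ) / (n p : ℝ)})
    (hfin : ∀ u v : ℝ, u < v → ((⋃ p, D p) ∩ Set.Ioc u v).Finite)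
    (a : P → P → ℝ)
    (h : P → P → ℝ → ℝ)
    -- the coefficients `c(p,k;p',k')`, characterized by the well-founded recursion
    (co : P → ℝ → P → ℝ → ℝ)
    (hco_diag : ∀ p p' k, k ∈ D p → k ∈ D p' → co p k p' k = if p = p' then 1 else 0)
    (hco_rec : ∀ p k p' k', k ∈ D p → k' ∈ D p' → k' < k →
      co p k p' k' = ∑ p'' : P, ∑ᶠ k'' ∈ D p'' ∩ Set.Ico k' k,
        a p p'' * h p p'' (k - k'') * co p'' k'' p' k') :
    ∀ p k p' k', k ∈ D p → k' ∈ D p' → k' ≤ k → ∀ m : ℤ,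
      (k + (m : ℝ)) ∈ D p ∧ (k' + (m : ℝ)) ∈ D p' ∧
        co p (k + (m : ℝ)) p' (k' + (m : ℝ)) = co p k p' k' := by
  intro p k p' k' hk hk' hle m
  have hshift : ∀ q x, x + (m : ℝ) ∈ D q ↔ x ∈ D q := fun q x => by
    rw [hD]
    exact add_int_mem_progression_iff (Nat.one_le_iff_ne_zero.1 (hn q)) m
  have hrec : SolvesRecursion D (fun p p'' x => a p p'' * h p p'' x) co := hco_rec
  refine ⟨(hshift p k).2 hk, (hshift p' k').2 hk', ?_⟩
  refine (hrec.comp_add hshift).eq hfin hrec (fun q q' x hx hx' => ?_) p k p' k' hk hk' hle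
  rw [hco_diag q q' _ ((hshift q x).2 hx) ((hshift q' x).2 hx'), hco_diag q q' x hx hx']

/-- **Lemma 4.3, point 2.** 1-periodicity of the coefficients. -/
theorem stmt_2
    {P : Type*} [Fintype P] [Nonempty P] [DecidableEq P]
    (n : P → ℕ) (hn : ∀ p, 1 ≤ n p)
    (θ : P → ℝ) (hθ0 : ∀ p, 0 ≤ θ p) (hθ1 : ∀ p, θ p < 1 / (n p : ℝ))
    (D : P → Set ℝ)
    (hD : ∀ p, D p = {k : ℝ | ∃ j : ℤ, k = θ p + (j : ℝ) / (n p : ℝ)})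
    (hfin : ∀ u v : ℝ, u < v → ((⋃ p, D p) ∩ Set.Ioc u v).Finite)
    (a : P → P → ℝ) (ha : ∀ p p', 0 ≤ a p p')
    (h : P → P → ℝ → ℝ) (hh : ∀ p p' x, 0 ≤ h p p' x)
    (hh0 : ∀ p p' x, x ≤ 0 → h p p' x = 0)
    -- the coefficients `c(p,k;p',k')`, characterized by the well-founded recursion
    (co : P → ℝ → P → ℝ → ℝ)
    (hco_nonneg : ∀ p k p' k', k ∈ D p → k' ∈ D p' → k' ≤ k → 0 ≤ co p k p' k')
    (hco_diag : ∀ p p' k, k ∈ D p → k ∈ D p' → co p k p' k = if p = p' then 1 else 0)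
    (hco_rec : ∀ p k p' k', k ∈ D p → k' ∈ D p' → k' < k →
      co p k p' k' = ∑ p'' : P, ∑ᶠ k'' ∈ D p'' ∩ Set.Ico k' k,
        a p p'' * h p p'' (k - k'') * co p'' k'' p' k') :
    ∀ p k p' k', k ∈ D p → k' ∈ D p' → k' ≤ k → ∀ m : ℤ,
      (k + (m : ℝ)) ∈ D p ∧ (k' + (m : ℝ)) ∈ D p' ∧
        co p (k + (m : ℝ)) p' (k' + (m : ℝ)) = co p k p' k' :=
  stmt_2_general n hn θ D hD hfin a h co hco_diag hco_rec
end

section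
/- Closed form of the coefficients as a sum over paths (Proposition 4.4): Let (p,k),(p',k') ∈ Q with k' < k. Call a path from (p',k') to (p,k) any finite sequence γ = ((p₁,k₁),…,(p_N,k_N)) of elements of Q with N ≥ 2, (p₁,k₁) = (p',k'), (p_N,k_N) = (p,k) and k₁ < k₂ < ⋯ < k_N; the set of such paths is finite, and for such a path γ set Y(γ) = ∏_{i=1}^{N−1} a^{p_{i+1}}_{p_i} h^{p_{i+1}}_{p_i}(k_{i+1}−k_i). Then c(p,k;p',k') = Σ_{γ path from (p',k') to (p,k)} Y(γ). -/
/-!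
Unfolding the recursion for `c(p,k;p',k')` once splits off the one-step path `(p',k') → (p,k)` and
leaves a sum over the intermediate points `(q,k'')` with `k' < k'' < k`. Paths from `(p',k')` to
`(p,k)` of length at least three decompose in the same way according to their last-but-one point,
and path weights are multiplicative along this decomposition, so the path sums obey the same
recursion. Strong induction on the number of points of `⋃ D_p` in `(k', k]` concludes.
-/

open Set

namespace List

variable {α : Type*}

theorem zip_tail_concat {l : List α} (hl : l ≠ []) (y : α) :
    (l ++ [y]).zip (l ++ [y]).tail = l.zip l.tail ++ [(l.getLast hl, y)] := by
  induction l with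
  | nil => exact absurd rfl hl
  | cons x l ih =>
    cases l with
    | nil => rfl
    | cons z l =>
      simp only [cons_append, tail_cons, zip_cons_cons] at ih ⊢
      rw [ih (cons_ne_nil z l), getLast_cons_cons]

theorem finite_setOf_nodup_forall_mem {S : Set α} (hS : S.Finite) :
    {l : List α | l.Nodup ∧ ∀ x ∈ l, x ∈ S}.Finite := by
  have := hS.fintype
  refine ((finite_length_le S (Fintype.card S)).image (map Subtype.val)).subset ?_
  rintro l ⟨hnd, hl⟩
  lift l to List S using hl
  exact ⟨l, (hnd.of_map _).length_le_card, rfl⟩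

end List

theorem finsum_mem_setOf_prod_eq_sum {ι β M : Type*} [Fintype ι] [AddCommMonoid M]
    {s : ι → Set β} (hs : ∀ i, (s i).Finite) (f : ι × β → M) :
    ∑ᶠ y ∈ {y : ι × β | y.2 ∈ s y.1}, f y = ∑ i, ∑ᶠ b ∈ s i, f (i, b) := by
  have hU : {y : ι × β | y.2 ∈ s y.1} = ⋃ i, Prod.mk i '' s i := by ext ⟨i, b⟩; simp
  rw [hU, finsum_mem_iUnion _ fun i => (hs i).image _, finsum_eq_sum_of_fintype]
  · simp only [finsum_mem_image (Prod.mk_right_injective _).injOn]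
  · intro i j hij
    simp only [Function.onFun, Set.disjoint_left, Set.mem_image]
    rintro _ ⟨b, -, rfl⟩ ⟨c, -, hc⟩
    exact hij (congrArg Prod.fst hc).symm

theorem finsum_mem_inter_Ico_eq_indicator_add {α M : Type*} [LinearOrder α] [AddCommMonoid M]
    {s : Set α} {a b : α} (hab : a < b) (hs : (s ∩ Ioo a b).Finite) (f : α → M) :
    ∑ᶠ k ∈ s ∩ Ico a b, f k = s.indicator f a + ∑ᶠ k ∈ s ∩ Ioo a b, f k := by
  have hnot : a ∉ s ∩ Ioo a b := fun h => lt_irrefl a h.2.1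
  rw [← Ioo_insert_left hab]
  by_cases ha : a ∈ s
  · rw [inter_insert_of_mem ha, finsum_mem_insert f hnot hs, indicator_of_mem ha]
  · rw [inter_insert_of_notMem ha, indicator_of_notMem ha, zero_add]

theorem Set.ncard_inter_Ioc_lt_of_lt {α : Type*} [LinearOrder α] {s : Set α} {u k v : α}
    (hv : v ∈ s) (huv : u < v) (hkv : k < v) (hfin : (s ∩ Ioc u v).Finite) :
    (s ∩ Ioc u k).ncard < (s ∩ Ioc u v).ncard := by
  refine ncard_lt_ncard ((ssubset_iff_of_subset ?_).2 ⟨v, ⟨hv, huv, le_rfl⟩, ?_⟩) hfin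
  · exact inter_subset_inter_right _ (Ioc_subset_Ioc_right hkv.le)
  · exact fun h => (h.2.2.trans_lt hkv).false

namespace PathExpansion

variable {P : Type*}

def edgeWeight (a : P → P → ℝ) (h : P → P → ℝ → ℝ) (s : (P × ℝ) × (P × ℝ)) : ℝ :=
  a s.2.1 s.1.1 * h s.2.1 s.1.1 (s.2.2 - s.1.2)

def pathWeight (a : P → P → ℝ) (h : P → P → ℝ → ℝ) (γ : List (P × ℝ)) : ℝ :=
  ((γ.zip γ.tail).map (edgeWeight a h)).prod

def paths (D : P → Set ℝ) (x y : P × ℝ) : Set (List (P × ℝ)) :=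
  {γ | 2 ≤ γ.length ∧ γ.head? = some x ∧ γ.getLast? = some y ∧ (∀ q ∈ γ, q.2 ∈ D q.1) ∧
    γ.IsChain (fun q r : P × ℝ => q.2 < r.2)}

noncomputable def pathSum (D : P → Set ℝ) (a : P → P → ℝ) (h : P → P → ℝ → ℝ) (x y : P × ℝ) :
    ℝ :=
  ∑ᶠ γ ∈ paths D x y, pathWeight a h γ

def LocallyFinitePoints (D : P → Set ℝ) : Prop :=
  ∀ u v : ℝ, u < v → ((⋃ p, D p) ∩ Ioc u v).Finite

variable {D : P → Set ℝ} {x y e : P × ℝ} {γ : List (P × ℝ)}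

theorem pairwise_of_mem_paths (hγ : γ ∈ paths D x y) :
    γ.Pairwise (fun q r : P × ℝ => q.2 < r.2) :=
  have : Trans (fun q r : P × ℝ => q.2 < r.2) (fun q r : P × ℝ => q.2 < r.2)
      (fun q r : P × ℝ => q.2 < r.2) := ⟨lt_trans⟩
  hγ.2.2.2.2.pairwise

theorem exists_eq_cons_of_mem_paths (hγ : γ ∈ paths D x y) : ∃ t, γ = x :: t ∧ y ∈ t := by
  obtain ⟨hlen, hhead, hlast, -⟩ := hγ
  match γ, hlen with
  | z :: w :: t, _ =>
    obtain rfl : z = x := by simpa using hhead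
    exact ⟨w :: t, rfl, List.mem_of_getLast? (by simpa [List.getLast?_cons_cons] using hlast)⟩

theorem lt_of_mem_paths (hγ : γ ∈ paths D x y) : x.2 < y.2 := by
  obtain ⟨t, rfl, hy⟩ := exists_eq_cons_of_mem_paths hγ
  exact (List.pairwise_cons.1 (pairwise_of_mem_paths hγ)).1 y hy

theorem snd_mem_Icc_of_mem_paths (hγ : γ ∈ paths D x y) {q : P × ℝ} (hq : q ∈ γ) :
    q.2 ∈ Icc x.2 y.2 := by
  have hp := pairwise_of_mem_paths hγ
  constructor
  · obtain ⟨t, rfl, -⟩ := exists_eq_cons_of_mem_paths hγ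
    rcases List.mem_cons.1 hq with rfl | hq
    · rfl
    · exact ((List.pairwise_cons.1 hp).1 q hq).le
  · rw [← List.dropLast_append_getLast? y hγ.2.2.1] at hp hq
    rcases List.mem_append.1 hq with hq | hq
    · exact ((List.pairwise_append.1 hp).2.2 q hq y (by simp)).le
    · rw [List.mem_singleton.1 hq]

theorem finite_points_Icc [Finite P] (hfin : LocallyFinitePoints D) (u v : ℝ) :
    {q : P × ℝ | q.2 ∈ D q.1 ∧ q.2 ∈ Icc u v}.Finite := by
  refine (Set.finite_univ.prod (hfin (u - 1) (max u v) ?_)).subset fun q hq => ?_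
  · linarith [le_max_left u v]
  · exact ⟨trivial, mem_iUnion.2 ⟨q.1, hq.1⟩, by linarith [hq.2.1], hq.2.2.trans (le_max_right u v)⟩

theorem finite_inter_Ioo (hfin : LocallyFinitePoints D) (q : P) {u v : ℝ} (huv : u < v) :
    (D q ∩ Ioo u v).Finite :=
  (hfin u v huv).subset fun _ hk => ⟨mem_iUnion.2 ⟨q, hk.1⟩, hk.2.1, hk.2.2.le⟩

theorem paths_finite [Finite P] (hfin : LocallyFinitePoints D) (x y : P × ℝ) :
    (paths D x y).Finite :=
  (List.finite_setOf_nodup_forall_mem (finite_points_Icc hfin x.2 y.2)).subset fun _ hγ =>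
    ⟨(pairwise_of_mem_paths hγ).imp fun hlt heq => hlt.ne (congrArg Prod.snd heq),
      fun _ hq => ⟨hγ.2.2.2.1 _ hq, snd_mem_Icc_of_mem_paths hγ hq⟩⟩

theorem paths_disjoint {y' : P × ℝ} (hne : y ≠ y') : Disjoint (paths D x y) (paths D x y') :=
  Set.disjoint_left.2 fun _ hγ hγ' =>
    hne (Option.some_injective _ (hγ.2.2.1.symm.trans hγ'.2.2.1))

theorem pair_mem_paths (hx : x.2 ∈ D x.1) (he : e.2 ∈ D e.1) (hlt : x.2 < e.2) :
    [x, e] ∈ paths D x e :=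
  ⟨le_rfl, rfl, rfl, by simp [hx, he], by simp [hlt]⟩

theorem concat_mem_paths {δ : List (P × ℝ)} (hδ : δ ∈ paths D x y) (he : e.2 ∈ D e.1)
    (hye : y.2 < e.2) : δ ++ [e] ∈ paths D x e := by
  obtain ⟨hlen, hhead, hlast, hmem, hchain⟩ := hδ
  refine ⟨by simp; omega, by rw [List.head?_append, hhead]; rfl, List.getLast?_concat, ?_, ?_⟩
  · exact fun q hq => (List.mem_append.1 hq).elim (hmem q) fun hq => by
      rw [List.mem_singleton.1 hq]; exact he
  · refine List.isChain_append.2 ⟨hchain, List.isChain_singleton _, fun q hq r hr => ?_⟩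
    obtain rfl : y = q := by simpa [hlast] using hq
    obtain rfl : e = r := by simpa using hr
    exact hye

theorem exists_eq_concat_of_mem_paths (hγ : γ ∈ paths D x e) (hlen : 3 ≤ γ.length) :
    ∃ y ∈ {y : P × ℝ | y.2 ∈ D y.1 ∩ Ioo x.2 e.2}, ∃ δ ∈ paths D x y, γ = δ ++ [e] := by
  obtain ⟨-, hhead, hlast, hmem, hchain⟩ := hγ
  have hγδ : γ = γ.dropLast ++ [e] := (List.dropLast_append_getLast? e hlast).symm
  have hδlen : 2 ≤ γ.dropLast.length := by rw [List.length_dropLast]; omega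
  have hδ : γ.dropLast ≠ [] := List.ne_nil_of_length_pos (by omega)
  set y := γ.dropLast.getLast hδ
  have hδpath : γ.dropLast ∈ paths D x y :=
    ⟨hδlen, by rw [List.head?_dropLast, if_pos (by omega), hhead],
      List.getLast?_eq_some_getLast hδ, fun q hq => hmem q (List.dropLast_subset _ hq),
      hchain.dropLast⟩
  have hye : y.2 < e.2 := by
    rw [hγδ, List.isChain_append] at hchain
    exact hchain.2.2 y (List.getLast?_eq_some_getLast hδ) e rfl
  exact ⟨y, ⟨hmem y (List.dropLast_subset _ (List.getLast_mem hδ)), lt_of_mem_paths hδpath, hye⟩,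
    _, hδpath, hγδ⟩

theorem paths_eq_insert (hx : x.2 ∈ D x.1) (he : e.2 ∈ D e.1) (hlt : x.2 < e.2) :
    paths D x e = insert [x, e]
      ((· ++ [e]) '' ⋃ y ∈ {y : P × ℝ | y.2 ∈ D y.1 ∩ Ioo x.2 e.2}, paths D x y) := by
  ext γ
  simp only [mem_insert_iff, mem_image, mem_iUnion₂]
  constructor
  · intro hγ
    rcases hγ.1.eq_or_lt with h2 | h3
    · left
      obtain ⟨t, rfl, het⟩ := exists_eq_cons_of_mem_paths hγ
      obtain ⟨e', rfl⟩ := List.length_eq_one_iff.1 (by simpa using h2.symm)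
      rw [List.mem_singleton.1 het]
    · obtain ⟨y, hy, δ, hδ, rfl⟩ := exists_eq_concat_of_mem_paths hγ h3
      exact Or.inr ⟨δ, ⟨y, hy, hδ⟩, rfl⟩
  · rintro (rfl | ⟨δ, ⟨y, hy, hδ⟩, rfl⟩)
    · exact pair_mem_paths hx he hlt
    · exact concat_mem_paths hδ he hy.2.2

theorem pathWeight_concat_of_mem_paths {a : P → P → ℝ} {h : P → P → ℝ → ℝ} {δ : List (P × ℝ)}
    (hδ : δ ∈ paths D x y) (e : P × ℝ) :
    pathWeight a h (δ ++ [e]) = pathWeight a h δ * edgeWeight a h (y, e) := by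
  have hne : δ ≠ [] := List.ne_nil_of_length_pos (by have := hδ.1; omega)
  obtain rfl : δ.getLast hne = y :=
    Option.some_injective _ ((List.getLast?_eq_some_getLast hne).symm.trans hδ.2.2.1)
  rw [pathWeight, pathWeight, List.zip_tail_concat hne, List.map_append, List.prod_append]
  simp

theorem pathSum_eq_edgeWeight_add [Fintype P] (hfin : LocallyFinitePoints D) (a : P → P → ℝ)
    (h : P → P → ℝ → ℝ) (hx : x.2 ∈ D x.1) (he : e.2 ∈ D e.1) (hlt : x.2 < e.2) :
    pathSum D a h x e = edgeWeight a h (x, e) + ∑ q, ∑ᶠ k ∈ D q ∩ Ioo x.2 e.2,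
      a e.1 q * h e.1 q (e.2 - k) * pathSum D a h x (q, k) := by
  set S := {y : P × ℝ | y.2 ∈ D y.1 ∩ Ioo x.2 e.2}
  have hS : S.Finite :=
    (finite_points_Icc hfin x.2 e.2).subset fun y hy => ⟨hy.1, hy.2.1.le, hy.2.2.le⟩
  have hU : (⋃ y ∈ S, paths D x y).Finite := hS.biUnion fun y _ => paths_finite hfin x y
  have hpair : [x, e] ∉ (· ++ [e]) '' ⋃ y ∈ S, paths D x y := by
    rintro ⟨δ, hδ, hδe⟩
    obtain ⟨y, -, hδ⟩ := mem_iUnion₂.1 hδ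
    have hlen := congrArg List.length hδe
    simp only [List.length_append, List.length_cons] at hlen
    exact absurd hδ.1 (by omega)
  rw [pathSum, paths_eq_insert hx he hlt, finsum_mem_insert _ hpair (hU.image _),
    finsum_mem_image (List.append_left_injective [e]).injOn,
    finsum_mem_biUnion (fun y _ y' _ hne => paths_disjoint hne) hS
      fun y _ => paths_finite hfin x y,
    finsum_mem_setOf_prod_eq_sum (s := fun q => D q ∩ Ioo x.2 e.2)
      fun q => finite_inter_Ioo hfin q hlt]
  congr 1
  · simp [pathWeight]
  · refine Finset.sum_congr rfl fun q _ => finsum_mem_congr rfl fun k _ => ?_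
    rw [pathSum, mul_comm, finsum_mem_mul]
    exact finsum_mem_congr rfl fun δ hδ => pathWeight_concat_of_mem_paths hδ e

variable [Fintype P] [DecidableEq P] {a : P → P → ℝ} {h : P → P → ℝ → ℝ}
  {co : P → ℝ → P → ℝ → ℝ}

theorem coeff_eq_edgeWeight_add (hfin : LocallyFinitePoints D)
    (hco_diag : ∀ p p' k, k ∈ D p → k ∈ D p' → co p k p' k = if p = p' then 1 else 0)
    (hco_rec : ∀ p k p' k', k ∈ D p → k' ∈ D p' → k' < k →
      co p k p' k' = ∑ p'' : P, ∑ᶠ k'' ∈ D p'' ∩ Ico k' k,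
        a p p'' * h p p'' (k - k'') * co p'' k'' p' k')
    (hx : x.2 ∈ D x.1) (he : e.2 ∈ D e.1) (hlt : x.2 < e.2) :
    co e.1 e.2 x.1 x.2 = edgeWeight a h (x, e) + ∑ q, ∑ᶠ k ∈ D q ∩ Ioo x.2 e.2,
      a e.1 q * h e.1 q (e.2 - k) * co q k x.1 x.2 := by
  have hsplit : ∀ q, ∑ᶠ k ∈ D q ∩ Ico x.2 e.2, a e.1 q * h e.1 q (e.2 - k) * co q k x.1 x.2 =
      (if q = x.1 then edgeWeight a h (x, e) else 0) + ∑ᶠ k ∈ D q ∩ Ioo x.2 e.2,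
        a e.1 q * h e.1 q (e.2 - k) * co q k x.1 x.2 := by
    intro q
    rw [finsum_mem_inter_Ico_eq_indicator_add hlt (finite_inter_Ioo hfin q hlt)]
    congr 1
    by_cases hq : x.2 ∈ D q
    · rw [indicator_of_mem hq, hco_diag q x.1 x.2 hq hx]
      split_ifs with hqx
      · subst hqx
        rw [mul_one]
        rfl
      · rw [mul_zero]
    · rw [indicator_of_notMem hq, if_neg (by rintro rfl; exact hq hx)]
  rw [hco_rec _ _ _ _ he hx hlt, Finset.sum_congr rfl fun q _ => hsplit q, Finset.sum_add_distrib,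
    Finset.sum_ite_eq', if_pos (Finset.mem_univ _)]

theorem coeff_eq_pathSum (hfin : LocallyFinitePoints D)
    (hco_diag : ∀ p p' k, k ∈ D p → k ∈ D p' → co p k p' k = if p = p' then 1 else 0)
    (hco_rec : ∀ p k p' k', k ∈ D p → k' ∈ D p' → k' < k →
      co p k p' k' = ∑ p'' : P, ∑ᶠ k'' ∈ D p'' ∩ Ico k' k,
        a p p'' * h p p'' (k - k'') * co p'' k'' p' k')
    (hx : x.2 ∈ D x.1) (e : P × ℝ) (he : e.2 ∈ D e.1) (hlt : x.2 < e.2) :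
    co e.1 e.2 x.1 x.2 = pathSum D a h x e := by
  induction hN : ((⋃ p, D p) ∩ Ioc x.2 e.2).ncard using Nat.strong_induction_on
      generalizing e with
  | _ N ih =>
    rw [coeff_eq_edgeWeight_add hfin hco_diag hco_rec hx he hlt,
      pathSum_eq_edgeWeight_add hfin a h hx he hlt]
    refine congrArg _ (Finset.sum_congr rfl fun q _ => finsum_mem_congr rfl fun k hk => ?_)
    have hcard := Set.ncard_inter_Ioc_lt_of_lt (mem_iUnion.2 ⟨e.1, he⟩) hlt hk.2.2 (hfin _ _ hlt)
    rw [ih _ (hN ▸ hcard) (q, k) hk.1 hk.2.1 rfl]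

end PathExpansion

theorem stmt_3_general
    {P : Type*} [Fintype P] [DecidableEq P]
    (D : P → Set ℝ)
    (hfin : ∀ u v : ℝ, u < v → ((⋃ p, D p) ∩ Set.Ioc u v).Finite)
    (a : P → P → ℝ)
    (h : P → P → ℝ → ℝ)
    -- the coefficients `c(p,k;p',k')`, characterized by the well-founded recursion
    (co : P → ℝ → P → ℝ → ℝ)
    (hco_diag : ∀ p p' k, k ∈ D p → k ∈ D p' → co p k p' k = if p = p' then 1 else 0)
    (hco_rec : ∀ p k p' k', k ∈ D p → k' ∈ D p' → k' < k →
      co p k p' k' = ∑ p'' : P, ∑ᶠ k'' ∈ D p'' ∩ Set.Ico k' k,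
        a p p'' * h p p'' (k - k'') * co p'' k'' p' k')
    (p p' : P) (k k' : ℝ) (hk : k ∈ D p) (hk' : k' ∈ D p') (hlt : k' < k) :
    {γ : List (P × ℝ) | 2 ≤ γ.length ∧ γ.head? = some (p', k') ∧
        γ.getLast? = some (p, k) ∧ (∀ q ∈ γ, q.2 ∈ D q.1) ∧
        List.Chain' (fun q r : P × ℝ => q.2 < r.2) γ}.Finite ∧
      co p k p' k' =
        ∑ᶠ γ ∈ {γ : List (P × ℝ) | 2 ≤ γ.length ∧ γ.head? = some (p', k') ∧
            γ.getLast? = some (p, k) ∧ (∀ q ∈ γ, q.2 ∈ D q.1) ∧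
            List.Chain' (fun q r : P × ℝ => q.2 < r.2) γ},
          (((γ.zip γ.tail).map fun q : (P × ℝ) × (P × ℝ) =>
              a q.2.1 q.1.1 * h q.2.1 q.1.1 (q.2.2 - q.1.2)).prod) :=
  ⟨PathExpansion.paths_finite hfin (p', k') (p, k),
    PathExpansion.coeff_eq_pathSum hfin hco_diag hco_rec (x := (p', k')) hk' (p, k) hk hlt⟩

/-- **Proposition 4.4.** Closed form of the coefficients as a sum over paths. -/
theorem stmt_3
    {P : Type*} [Fintype P] [Nonempty P] [DecidableEq P]
    (n : P → ℕ) (hn : ∀ p, 1 ≤ n p)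
    (θ : P → ℝ) (hθ0 : ∀ p, 0 ≤ θ p) (hθ1 : ∀ p, θ p < 1 / (n p : ℝ))
    (D : P → Set ℝ)
    (hD : ∀ p, D p = {k : ℝ | ∃ j : ℤ, k = θ p + (j : ℝ) / (n p : ℝ)})
    (hfin : ∀ u v : ℝ, u < v → ((⋃ p, D p) ∩ Set.Ioc u v).Finite)
    (a : P → P → ℝ) (ha : ∀ p p', 0 ≤ a p p')
    (h : P → P → ℝ → ℝ) (hh : ∀ p p' x, 0 ≤ h p p' x)
    (hh0 : ∀ p p' x, x ≤ 0 → h p p' x = 0)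
    -- the coefficients `c(p,k;p',k')`, characterized by the well-founded recursion
    (co : P → ℝ → P → ℝ → ℝ)
    (hco_nonneg : ∀ p k p' k', k ∈ D p → k' ∈ D p' → k' ≤ k → 0 ≤ co p k p' k')
    (hco_diag : ∀ p p' k, k ∈ D p → k ∈ D p' → co p k p' k = if p = p' then 1 else 0)
    (hco_rec : ∀ p k p' k', k ∈ D p → k' ∈ D p' → k' < k →
      co p k p' k' = ∑ p'' : P, ∑ᶠ k'' ∈ D p'' ∩ Set.Ico k' k,
        a p p'' * h p p'' (k - k'') * co p'' k'' p' k')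
    (p p' : P) (k k' : ℝ) (hk : k ∈ D p) (hk' : k' ∈ D p') (hlt : k' < k) :
    {γ : List (P × ℝ) | 2 ≤ γ.length ∧ γ.head? = some (p', k') ∧
        γ.getLast? = some (p, k) ∧ (∀ q ∈ γ, q.2 ∈ D q.1) ∧
        List.Chain' (fun q r : P × ℝ => q.2 < r.2) γ}.Finite ∧
      co p k p' k' =
        ∑ᶠ γ ∈ {γ : List (P × ℝ) | 2 ≤ γ.length ∧ γ.head? = some (p', k') ∧
            γ.getLast? = some (p, k) ∧ (∀ q ∈ γ, q.2 ∈ D q.1) ∧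
            List.Chain' (fun q r : P × ℝ => q.2 < r.2) γ},
          (((γ.zip γ.tail).map fun q : (P × ℝ) × (P × ℝ) =>
              a q.2.1 q.1.1 * h q.2.1 q.1.1 (q.2.2 - q.1.2)).prod) :=
  stmt_3_general D hfin a h co hco_diag hco_rec p p' k k' hk hk' hlt
end

section
/- Vanishing of L¹-bounded solutions of the homogeneous chain equation (Proposition B.2, first part): Let (Ω,𝒜,ℙ) be a probability space and, for each (p,k) ∈ Q, let V(p,k) : Ω → ℝ be a random variable, with sup_{(p,k)∈Q} E[|V(p,k)|] < ∞. Assume that for every (p,k) ∈ Q, almost surely the family (a^p_{p'} h^p_{p'}(k−k') V(p',k'))_{p'∈P, k'∈D_{p'}, k'<k} is absolutely summable with sum equal to V(p,k). Then for every (p,k) ∈ Q, V(p,k) = 0 almost surely. -/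
/-! Let `M p = sup_k E|V(p,k)|`, finite by the L¹ bound. Taking expectations in the chain equation
and summing the kernel `h^p_{p'}(k - ·)` over the lattice `D_{p'}` gives `M ≤ H M` entrywise, hence
`M ≤ H^N M ≤ C H^N 1` for every `N`. By Gelfand's formula `H^N → 0`, since the spectral radius of
`H` is below `1`, so `M = 0`. -/

open scoped ENNReal NNReal
open MeasureTheory Filter Topology Matrix

theorem tendsto_pow_nhds_zero_of_spectralRadius_lt_one {A : Type*} [NormedRing A]
    [NormedAlgebra ℂ A] [CompleteSpace A] {a : A} (ha : spectralRadius ℂ a < 1) :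
    Tendsto (fun n : ℕ => a ^ n) atTop (𝓝 0) := by
  obtain ⟨r, hρr, hr1⟩ := exists_between ha
  lift r to ℝ≥0 using (hr1.trans ENNReal.one_lt_top).ne
  have hgelfand := spectrum.pow_nnnorm_pow_one_div_tendsto_nhds_spectralRadius a
  have hbound : ∀ᶠ n : ℕ in atTop, ‖a ^ n‖ ≤ (r : ℝ) ^ n := by
    filter_upwards [hgelfand.eventually_lt_const hρr, eventually_gt_atTop 0] with n hn hn0
    have := ENNReal.rpow_le_rpow hn.le (z := n) (by positivity)
    rw [← ENNReal.rpow_mul, one_div_mul_cancel (by positivity), ENNReal.rpow_one,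
      ENNReal.rpow_natCast] at this
    exact_mod_cast this
  exact squeeze_zero_norm' hbound
    (tendsto_pow_atTop_nhds_zero_of_lt_one r.coe_nonneg (by exact_mod_cast hr1))

section
attribute [local instance] Matrix.linftyOpNormedRing Matrix.linftyOpNormedAlgebra

theorem Matrix.tendsto_pow_apply_of_spectralRadius_lt_one {ι : Type*} [Fintype ι] [DecidableEq ι]
    {A : Matrix ι ι ℝ} (hA : spectralRadius ℂ (A.map (algebraMap ℝ ℂ)) < 1) (i j : ι) :
    Tendsto (fun n : ℕ => (A ^ n) i j) atTop (𝓝 0) := by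
  have hpow (n : ℕ) : A.map (algebraMap ℝ ℂ) ^ n = (A ^ n).map (algebraMap ℝ ℂ) :=
    (map_pow (algebraMap ℝ ℂ).mapMatrix A n).symm
  have h := (Complex.continuous_re.comp (continuous_id.matrix_elem i j)).tendsto 0
    |>.comp (tendsto_pow_nhds_zero_of_spectralRadius_lt_one hA)
  simp only [hpow] at h
  simpa [Function.comp_def] using h
end

theorem Matrix.map_ofReal_pow {ι : Type*} [Fintype ι] [DecidableEq ι] {A : Matrix ι ι ℝ}
    (hA : ∀ i j, 0 ≤ A i j) (n : ℕ) :
    A.map ENNReal.ofReal ^ n = (A ^ n).map ENNReal.ofReal := by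
  -- `ENNReal.ofReal` is not a ring hom, but on a nonnegative matrix it factors through `ℝ≥0`.
  set A' := A.map Real.toNNReal
  have hA' : A = NNReal.toRealHom.mapMatrix A' := by
    ext i j; simp [A', Real.coe_toNNReal _ (hA i j)]
  have : A.map ENNReal.ofReal = ENNReal.ofNNRealHom.mapMatrix A' := rfl
  rw [this, ← map_pow, hA', ← map_pow]
  ext i j
  exact ENNReal.ofReal_coe_nnreal.symm

theorem Matrix.le_pow_mulVec_of_le_mulVec {ι : Type*} [Fintype ι] [DecidableEq ι]
    {B : Matrix ι ι ℝ≥0∞} {v : ι → ℝ≥0∞} (hv : v ≤ B *ᵥ v) (n : ℕ) : v ≤ B ^ n *ᵥ v := by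
  induction n with
  | zero => simp
  | succ n ih =>
    calc v ≤ B ^ n *ᵥ v := ih
      _ ≤ B ^ n *ᵥ (B *ᵥ v) := fun i => Finset.sum_le_sum fun j _ => by gcongr; exact hv j
      _ = B ^ (n + 1) *ᵥ v := by rw [mulVec_mulVec, pow_succ]

theorem Matrix.eq_zero_of_le_mulVec_of_tendsto_pow {ι : Type*} [Fintype ι] [DecidableEq ι]
    {B : Matrix ι ι ℝ≥0∞} (hB : ∀ i j, Tendsto (fun n : ℕ => (B ^ n) i j) atTop (𝓝 0))
    {v : ι → ℝ≥0∞} {C : ℝ≥0∞} (hC : C ≠ ⊤) (hvC : ∀ i, v i ≤ C) (hv : v ≤ B *ᵥ v) : v = 0 := by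
  funext i
  have hlim : Tendsto (fun n : ℕ => ∑ j, (B ^ n) i j * C) atTop (𝓝 0) := by
    simpa using tendsto_finsetSum Finset.univ fun j _ =>
      ENNReal.Tendsto.mul_const (hB i j) (.inr hC)
  refine le_antisymm (ge_of_tendsto' hlim fun n => ?_) bot_le
  exact (le_pow_mulVec_of_le_mulVec hv n i).trans
    (Finset.sum_le_sum fun j _ => by gcongr; exact hvC j)

theorem tsum_comp_sub_le_iSup_tsum {θ c : ℝ} {S : Set ℝ} (hS : S ⊆ {x | ∃ j : ℤ, x = θ + j / c})
    (f : ℝ → ℝ≥0∞) (k : ℝ) :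
    ∑' s : S, f (k - s) ≤ ⨆ x : ℝ, ∑' j : ℤ, f (x + j / c) := by
  choose J hJ using fun s : S => hS s.2
  have hJinj : Function.Injective (fun s => -J s) := fun s t hst =>
    Subtype.ext <| by rw [hJ s, hJ t, neg_inj.mp hst]
  calc ∑' s : S, f (k - s) = ∑' s : S, f ((k - θ) + ((-J s : ℤ) : ℝ) / c) := by
        refine tsum_congr fun s => ?_
        rw [hJ s]; congr 1; push_cast; ring
    _ ≤ ∑' j : ℤ, f ((k - θ) + j / c) :=
        ENNReal.tsum_comp_le_tsum_of_injective hJinj (fun j : ℤ => f ((k - θ) + j / c))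
    _ ≤ ⨆ x : ℝ, ∑' j : ℤ, f (x + j / c) := le_iSup (fun x : ℝ => ∑' j : ℤ, f (x + j / c)) _

theorem lintegral_enorm_le_tsum_mul_lintegral_enorm {Ω ι : Type*} [MeasurableSpace Ω]
    {μ : Measure Ω} [Countable ι] {Y : Ω → ℝ} {X : ι → Ω → ℝ} (hX : ∀ i, Measurable (X i))
    (c : ι → ℝ) (hY : ∀ᵐ ω ∂μ, Y ω = ∑' i, c i * X i ω) :
    ∫⁻ ω, ‖Y ω‖ₑ ∂μ ≤ ∑' i, ‖c i‖ₑ * ∫⁻ ω, ‖X i ω‖ₑ ∂μ := by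
  calc ∫⁻ ω, ‖Y ω‖ₑ ∂μ ≤ ∫⁻ ω, ∑' i, ‖c i‖ₑ * ‖X i ω‖ₑ ∂μ := by
        refine lintegral_mono_ae (hY.mono fun ω hω => ?_)
        rw [hω]
        simpa only [enorm_mul] using enorm_tsum_le_tsum_enorm (f := fun i => c i * X i ω)
    _ = ∑' i, ‖c i‖ₑ * ∫⁻ ω, ‖X i ω‖ₑ ∂μ := by
        rw [lintegral_tsum fun i => ((hX i).enorm.const_mul _).aemeasurable]
        exact tsum_congr fun i => lintegral_const_mul _ (hX i).enorm

noncomputable def supLintegralEnorm {P Ω : Type*} [MeasurableSpace Ω] (μ : Measure Ω)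
    (D : P → Set ℝ) (V : P → ℝ → Ω → ℝ) (p : P) : ℝ≥0∞ :=
  ⨆ k ∈ D p, ∫⁻ ω, ‖V p k ω‖ₑ ∂μ

theorem lintegral_enorm_le_mulVec_supLintegralEnorm {P Ω : Type*} [Fintype P]
    [MeasurableSpace Ω] {μ : Measure Ω} {θ c : P → ℝ} {D : P → Set ℝ}
    (hD : ∀ p, D p ⊆ {x | ∃ j : ℤ, x = θ p + j / c p})
    {a : P → P → ℝ} (ha : ∀ p q, 0 ≤ a p q) {h : P → P → ℝ → ℝ} (hh : ∀ p q x, 0 ≤ h p q x)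
    {H : Matrix P P ℝ} {p : P}
    (hH : ∀ q, ENNReal.ofReal (a p q) * ⨆ x : ℝ, ∑' j : ℤ, ENNReal.ofReal (h p q (x + j / c q)) ≤
      ENNReal.ofReal (H p q))
    {V : P → ℝ → Ω → ℝ} (hVmeas : ∀ q x, x ∈ D q → Measurable (V q x)) {k : ℝ}
    (hV : ∀ᵐ ω ∂μ, V p k ω = ∑' i : Σ q, ↥(D q ∩ Set.Iio k),
      a p i.1 * h p i.1 (k - i.2) * V i.1 i.2 ω) :
    ∫⁻ ω, ‖V p k ω‖ₑ ∂μ ≤ (H.map ENNReal.ofReal *ᵥ supLintegralEnorm μ D V) p := by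
  set M := supLintegralEnorm μ D V
  have (q : P) : Countable ↥(D q ∩ Set.Iio k) := by
    refine ((Set.countable_range fun j : ℤ => θ q + j / c q).mono ?_).to_subtype
    rintro x ⟨hx, -⟩
    obtain ⟨j, rfl⟩ := hD q hx
    exact ⟨j, rfl⟩
  calc ∫⁻ ω, ‖V p k ω‖ₑ ∂μ
      ≤ ∑' i : Σ q, ↥(D q ∩ Set.Iio k),
          ‖a p i.1 * h p i.1 (k - i.2)‖ₑ * ∫⁻ ω, ‖V i.1 i.2 ω‖ₑ ∂μ :=
        lintegral_enorm_le_tsum_mul_lintegral_enorm (fun i => hVmeas _ _ i.2.2.1) _ hV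
    _ ≤ ∑' i : Σ q, ↥(D q ∩ Set.Iio k),
          ENNReal.ofReal (a p i.1) * ENNReal.ofReal (h p i.1 (k - i.2)) * M i.1 := by
        refine ENNReal.tsum_le_tsum fun i => ?_
        rw [enorm_mul, Real.enorm_of_nonneg (ha _ _), Real.enorm_of_nonneg (hh _ _ _)]
        gcongr
        exact le_iSup₂ (f := fun x _ => ∫⁻ ω, ‖V i.1 x ω‖ₑ ∂μ) (i.2 : ℝ) i.2.2.1
    _ = ∑ q, ENNReal.ofReal (a p q) * (∑' s : ↥(D q ∩ Set.Iio k), ENNReal.ofReal (h p q (k - s)))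
          * M q := by
        rw [ENNReal.tsum_sigma', tsum_fintype]
        simp_rw [ENNReal.tsum_mul_right, ENNReal.tsum_mul_left]
    _ ≤ ∑ q, ENNReal.ofReal (H p q) * M q := by
        gcongr with q
        refine le_trans ?_ (hH q)
        gcongr
        exact tsum_comp_sub_le_iSup_tsum (Set.inter_subset_left.trans (hD q))
          (fun x => ENNReal.ofReal (h p q x)) k

theorem stmt_7_general
    {P : Type*} [Fintype P] [DecidableEq P]
    (n : P → ℕ)
    (θ : P → ℝ)
    (D : P → Set ℝ)
    (hD : ∀ p, D p = {k : ℝ | ∃ j : ℤ, k = θ p + (j : ℝ) / (n p : ℝ)})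
    (a : P → P → ℝ) (ha : ∀ p p', 0 ≤ a p p')
    (h : P → P → ℝ → ℝ) (hh : ∀ p p' x, 0 ≤ h p p' x)
    -- the matrix `H` of the interaction norms: its entries are finite reals
    (Hm : Matrix P P ℝ) (hHm0 : ∀ p p', 0 ≤ Hm p p')
    (hHm : ∀ p p', ENNReal.ofReal (Hm p p') =
      ENNReal.ofReal (a p p') *
        ⨆ x : ℝ, ∑' j : ℤ, ENNReal.ofReal (h p p' (x + (j : ℝ) / (n p' : ℝ))))
    -- the spectral radius of `H` is strictly less than 1
    (hspec : spectralRadius ℂ (Hm.map (algebraMap ℝ ℂ)) < 1)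
    -- a probability space and an L¹-bounded solution of the homogeneous equation
    {Ω : Type*} [MeasureSpace Ω]
    (V : P → ℝ → Ω → ℝ)
    (hVmeas : ∀ (p : P) (k : ℝ), k ∈ D p → Measurable (V p k))
    (C : ℝ≥0∞) (hC : C ≠ ⊤)
    (hVL1 : ∀ (p : P) (k : ℝ), k ∈ D p → ∫⁻ ω, ENNReal.ofReal |V p k ω| ≤ C)
    (hVeq : ∀ (p : P) (k : ℝ), k ∈ D p → ∀ᵐ ω,
      Summable (fun i : Σ p' : P, (D p' ∩ Set.Iio k : Set ℝ) =>
        a p i.1 * h p i.1 (k - (i.2 : ℝ)) * V i.1 (i.2 : ℝ) ω) ∧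
      V p k ω = ∑' i : Σ p' : P, (D p' ∩ Set.Iio k : Set ℝ),
        a p i.1 * h p i.1 (k - (i.2 : ℝ)) * V i.1 (i.2 : ℝ) ω) :
    ∀ (p : P) (k : ℝ), k ∈ D p → ∀ᵐ ω, V p k ω = 0 := by
  set M := supLintegralEnorm volume D V
  have hM : M ≤ Hm.map ENNReal.ofReal *ᵥ M := fun q => iSup₂_le fun k hk =>
    lintegral_enorm_le_mulVec_supLintegralEnorm (fun p => (hD p).le) ha hh
      (fun q' => (hHm q q').ge) hVmeas ((hVeq q k hk).mono fun _ => And.right)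
  have hMC (q : P) : M q ≤ C := iSup₂_le fun k hk => by
    simpa only [Real.enorm_eq_ofReal_abs] using hVL1 q k hk
  have hpow (i j : P) : Tendsto (fun N : ℕ => (Hm.map ENNReal.ofReal ^ N) i j) atTop (𝓝 0) := by
    simpa [Matrix.map_ofReal_pow hHm0] using
      ENNReal.tendsto_ofReal (Matrix.tendsto_pow_apply_of_spectralRadius_lt_one hspec i j)
  have hM0 : M = 0 := Matrix.eq_zero_of_le_mulVec_of_tendsto_pow hpow hC hMC hM
  intro p k hk
  have hL1 : ∫⁻ ω, ‖V p k ω‖ₑ = 0 := nonpos_iff_eq_zero.mp <|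
    (le_iSup₂ (f := fun x _ => ∫⁻ ω, ‖V p x ω‖ₑ) k hk).trans (congrFun hM0 p).le
  filter_upwards [(lintegral_eq_zero_iff (hVmeas p k hk).enorm).mp hL1] with ω hω
  simpa using hω

/-- **Proposition B.2, first part.**
Vanishing of L¹-bounded solutions of the homogeneous chain equation. -/
theorem stmt_7
    {P : Type*} [Fintype P] [Nonempty P] [DecidableEq P]
    (n : P → ℕ) (hn : ∀ p, 1 ≤ n p)
    (θ : P → ℝ) (hθ0 : ∀ p, 0 ≤ θ p) (hθ1 : ∀ p, θ p < 1 / (n p : ℝ))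
    (D : P → Set ℝ)
    (hD : ∀ p, D p = {k : ℝ | ∃ j : ℤ, k = θ p + (j : ℝ) / (n p : ℝ)})
    (hfin : ∀ u v : ℝ, u < v → ((⋃ p, D p) ∩ Set.Ioc u v).Finite)
    (a : P → P → ℝ) (ha : ∀ p p', 0 ≤ a p p')
    (h : P → P → ℝ → ℝ) (hh : ∀ p p' x, 0 ≤ h p p' x)
    (hh0 : ∀ p p' x, x ≤ 0 → h p p' x = 0)
    -- the matrix `H` of the interaction norms: its entries are finite reals
    (Hm : Matrix P P ℝ) (hHm0 : ∀ p p', 0 ≤ Hm p p')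
    (hHm : ∀ p p', ENNReal.ofReal (Hm p p') =
      ENNReal.ofReal (a p p') *
        ⨆ x : ℝ, ∑' j : ℤ, ENNReal.ofReal (h p p' (x + (j : ℝ) / (n p' : ℝ))))
    -- the spectral radius of `H` is strictly less than 1
    (hspec : spectralRadius ℂ (Hm.map (algebraMap ℝ ℂ)) < 1)
    -- a probability space and an L¹-bounded solution of the homogeneous equation
    {Ω : Type*} [MeasureSpace Ω] [IsProbabilityMeasure (volume : Measure Ω)]
    (V : P → ℝ → Ω → ℝ)
    (hVmeas : ∀ (p : P) (k : ℝ), k ∈ D p → Measurable (V p k))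
    (C : ℝ≥0∞) (hC : C ≠ ⊤)
    (hVL1 : ∀ (p : P) (k : ℝ), k ∈ D p → ∫⁻ ω, ENNReal.ofReal |V p k ω| ≤ C)
    (hVeq : ∀ (p : P) (k : ℝ), k ∈ D p → ∀ᵐ ω,
      Summable (fun i : Σ p' : P, (D p' ∩ Set.Iio k : Set ℝ) =>
        a p i.1 * h p i.1 (k - (i.2 : ℝ)) * V i.1 (i.2 : ℝ) ω) ∧
      V p k ω = ∑' i : Σ p' : P, (D p' ∩ Set.Iio k : Set ℝ),
        a p i.1 * h p i.1 (k - (i.2 : ℝ)) * V i.1 (i.2 : ℝ) ω) :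
    ∀ (p : P) (k : ℝ), k ∈ D p → ∀ᵐ ω, V p k ω = 0 :=
  stmt_7_general n θ D hD a ha h hh Hm hHm0 hHm hspec V hVmeas C hC hVL1 hVeq
end

section
/- Exponential decay of the coefficients (Proposition 6.1, first part): Assume in addition that there exist constants K₀, c₀ > 0 such that h^p_{p'}(x) ≤ K₀ e^{−c₀ x} for all p, p' ∈ P and all x > 0. Then there exist constants K, c > 0 such that for all (p,k),(p',k') ∈ Q with k' ≤ k, c(p,k;p',k') ≤ K e^{−c(k−k')}. -/
open scoped BigOperators ENNReal

/-!
Since `H` is entrywise nonnegative with spectral radius `< 1`, the Neumann series `∑ₘ Hᵐ 1`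
converges to a positive vector `w` with `H w < w` componentwise. Because the interaction
functions have exponential tails, the tilted kernels `a h(t) e^{ct}` have interaction norms at
most `H + O(c)` (the grid sums of `e^{-c₀ t / 2}` are bounded by a geometric series), so for
small `c > 0` the vector `w` stays superharmonic for them. Following the recursion,
`c(p,k;p',k') e^{c(k-k')} ≤ w_p / w_{p'}` then holds by induction on the number of lattice
points in `(k', k]`.
-/

open Filter Topology Real
open scoped Matrix

theorem summable_norm_pow_of_spectralRadius_lt_one {A : Type*} [NormedRing A]
    [NormedAlgebra ℂ A] [CompleteSpace A] {a : A} (ha : spectralRadius ℂ a < 1) :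
    Summable fun m : ℕ => ‖a ^ m‖ := by
  obtain ⟨r, hr, hr1⟩ := ENNReal.lt_iff_exists_nnreal_btwn.mp ha
  have hr1 : (r : ℝ) < 1 := by exact_mod_cast hr1
  refine Summable.of_norm_bounded_eventually_nat
    (summable_geometric_of_lt_one r.coe_nonneg hr1) ?_
  filter_upwards [(spectrum.pow_nnnorm_pow_one_div_tendsto_nhds_spectralRadius a).eventually_lt_const
    hr, eventually_gt_atTop 0] with m hm hm0
  have hm : ‖a ^ m‖₊ < r ^ m := by
    have := ENNReal.pow_lt_pow_left hm0.ne' hm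
    rwa [← ENNReal.rpow_natCast, ← ENNReal.rpow_mul, one_div, inv_mul_cancel₀ (by positivity),
      ENNReal.rpow_one, ← ENNReal.coe_pow, ENNReal.coe_lt_coe] at this
  rw [norm_norm]
  exact_mod_cast hm.le

namespace Matrix

section LinftyOpNorm

attribute [local instance] Matrix.linftyOpNormedAddCommGroup Matrix.linftyOpNormedRing
  Matrix.linftyOpNormedAlgebra

theorem linfty_opNorm_map_ofReal {m n : Type*} [Fintype m] [Fintype n] (A : Matrix m n ℝ) :
    ‖A.map (algebraMap ℝ ℂ)‖ = ‖A‖ := by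
  simp only [linfty_opNorm_def, map_apply, Complex.coe_algebraMap, Complex.nnnorm_real]

theorem summable_pow_of_spectralRadius_lt_one {P : Type*} [Fintype P] [DecidableEq P]
    {H : Matrix P P ℝ} (hspec : spectralRadius ℂ (H.map (algebraMap ℝ ℂ)) < 1) :
    Summable fun m : ℕ => H ^ m := by
  refine .of_norm ((summable_norm_pow_of_spectralRadius_lt_one hspec).congr fun m => ?_)
  rw [← linfty_opNorm_map_ofReal, ← RingHom.mapMatrix_apply, ← RingHom.mapMatrix_apply, map_pow]

end LinftyOpNorm

theorem exists_pos_mulVec_lt_of_spectralRadius_lt_one {P : Type*} [Fintype P] [DecidableEq P]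
    {H : Matrix P P ℝ} (hH : ∀ i j, 0 ≤ H i j)
    (hspec : spectralRadius ℂ (H.map (algebraMap ℝ ℂ)) < 1) :
    ∃ w : P → ℝ, (∀ i, 0 < w i) ∧ ∀ i, (H *ᵥ w) i < w i := by
  have hsum := summable_pow_of_spectralRadius_lt_one hspec
  have hN : ∑' m : ℕ, H ^ m = 1 + H * ∑' m : ℕ, H ^ m := by
    rw [← hsum.tsum_mul_left]
    simp only [← pow_succ']
    exact hsum.tsum_eq_zero_add
  have hN0 : ∀ i j, 0 ≤ (∑' m : ℕ, H ^ m) i j := fun i j =>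
    (Pi.hasSum.mp (Pi.hasSum.mp hsum.hasSum i) j).nonneg fun m => pow_apply_nonneg hH m i j
  generalize ∑' m : ℕ, H ^ m = N at hN hN0
  have hw : ∀ i, (N *ᵥ 1) i = 1 + (H *ᵥ (N *ᵥ 1)) i := fun i => by
    conv_lhs => rw [hN, add_mulVec, one_mulVec, ← mulVec_mulVec]
    rfl
  have hHw : ∀ i, 0 ≤ (H *ᵥ (N *ᵥ 1)) i := fun i =>
    Finset.sum_nonneg fun j _ => mul_nonneg (hH i j) <|
      Finset.sum_nonneg fun l _ => mul_nonneg (hN0 j l) zero_le_one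
  exact ⟨N *ᵥ 1, fun i => by linarith [hw i, hHw i], fun i => by linarith [hw i]⟩

theorem exists_pos_add_smul_mulVec_le {P : Type*} [Fintype P] {H : Matrix P P ℝ} {w : P → ℝ}
    (hw : ∀ i, (H *ᵥ w) i < w i) (C : Matrix P P ℝ) {c₁ : ℝ} (hc₁ : 0 < c₁) :
    ∃ c, 0 < c ∧ c ≤ c₁ ∧ (H + c • C) *ᵥ w ≤ w := by
  have hnear : ∀ᶠ c in 𝓝 (0 : ℝ), ∀ i, ((H + c • C) *ᵥ w) i < w i := by
    refine eventually_all.2 fun i => ?_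
    have hcont : Continuous fun c : ℝ => ((H + c • C) *ᵥ w) i := by
      simp only [add_mulVec, smul_mulVec, Pi.add_apply, Pi.smul_apply, smul_eq_mul]
      fun_prop
    exact hcont.continuousAt.eventually_lt continuousAt_const (by simpa using hw i)
  obtain ⟨c, hc, hc0, hc1⟩ :=
    ((hnear.filter_mono nhdsWithin_le_nhds).and (Ioc_mem_nhdsGT hc₁)).exists
  exact ⟨c, hc0, hc1, fun i => (hc i).le⟩

end Matrix

theorem Finset.exists_sum_eq_sum_int_of_grid {M : Type*} [AddCommMonoid M] {n : ℕ} (hn : n ≠ 0)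
    {θ : ℝ} {S : Finset ℝ} (hS : ∀ x ∈ S, ∃ j : ℤ, x = θ + j / n) (g : ℝ → M) :
    ∃ J : Finset ℤ, (∀ j ∈ J, θ - j / n ∈ S) ∧ ∑ x ∈ S, g x = ∑ j ∈ J, g (θ - j / n) := by
  have hinj : Function.Injective fun j : ℤ => θ - j / n := fun i j hij => by
    have hn' : (n : ℝ) ≠ 0 := Nat.cast_ne_zero.mpr hn
    have : (i : ℝ) = j := by simpa [sub_right_inj, div_left_inj' hn'] using hij
    exact_mod_cast this
  refine ⟨S.preimage _ hinj.injOn,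
    fun j hj => (Finset.mem_preimage (f := fun j : ℤ => θ - j / n)).mp hj,
    (Finset.sum_preimage _ S _ g fun x hx hxr => ?_).symm⟩
  obtain ⟨j, rfl⟩ := hS x hx
  exact absurd ⟨-j, by push_cast; ring⟩ hxr

theorem sum_exp_neg_mul_int_le {β z : ℝ} (hβ : 0 < β) {J : Finset ℤ}
    (hJ : ∀ j ∈ J, 0 < z + j) : ∑ j ∈ J, exp (-β * (z + j)) ≤ (1 - exp (-β))⁻¹ := by
  have hJ' : ∀ j ∈ J, 0 ≤ ⌊z⌋ + j := fun j hj => by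
    have : (-1 : ℝ) < ⌊z⌋ + j := by linarith [Int.sub_one_lt_floor z, hJ j hj]
    exact_mod_cast this
  have hexp : ∀ j ∈ J, exp (-β * (z + j)) ≤ exp (-β) ^ (⌊z⌋ + j).toNat := fun j hj => by
    rw [← exp_nat_mul, exp_le_exp]
    have : ((⌊z⌋ + j).toNat : ℝ) ≤ z + j := by
      rw [← Int.cast_natCast, Int.toNat_of_nonneg (hJ' j hj)]
      push_cast
      linarith [Int.floor_le z]
    nlinarith
  have hinj : Set.InjOn (fun j => (⌊z⌋ + j).toNat) J := fun i hi j hj hij => by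
    have := congrArg (fun m : ℕ => (m : ℤ)) hij
    simp only [Int.toNat_of_nonneg (hJ' i hi), Int.toNat_of_nonneg (hJ' j hj)] at this
    omega
  have hr : exp (-β) < 1 := exp_lt_one_iff.mpr (neg_lt_zero.mpr hβ)
  calc ∑ j ∈ J, exp (-β * (z + j)) ≤ ∑ j ∈ J, exp (-β) ^ (⌊z⌋ + j).toNat :=
        Finset.sum_le_sum hexp
    _ = ∑ m ∈ J.image fun j => (⌊z⌋ + j).toNat, exp (-β) ^ m := (Finset.sum_image hinj).symm
    _ ≤ ∑' m : ℕ, exp (-β) ^ m :=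
      (summable_geometric_of_lt_one (exp_pos _).le hr).sum_le_tsum _ fun _ _ => by positivity
    _ = (1 - exp (-β))⁻¹ := tsum_geometric_of_lt_one (exp_pos _).le hr

section Grid

variable {n : ℕ} {θ : ℝ} {S : Finset ℝ}

theorem sum_le_iSup_tsum_of_grid (hn : n ≠ 0) (hS : ∀ x ∈ S, ∃ j : ℤ, x = θ + j / n)
    (g : ℝ → ℝ≥0∞) (k : ℝ) : ∑ x ∈ S, g (k - x) ≤ ⨆ y : ℝ, ∑' j : ℤ, g (y + j / n) := by
  obtain ⟨J, -, hJ⟩ := Finset.exists_sum_eq_sum_int_of_grid hn hS fun x => g (k - x)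
  calc ∑ x ∈ S, g (k - x) = ∑ j ∈ J, g (k - θ + j / n) := by
        rw [hJ]; simp only [sub_sub_eq_add_sub, add_sub_right_comm]
    _ ≤ ∑' j : ℤ, g (k - θ + j / n) := ENNReal.sum_le_tsum _
    _ ≤ ⨆ y : ℝ, ∑' j : ℤ, g (y + j / n) := le_iSup (fun y : ℝ => ∑' j : ℤ, g (y + j / n)) _

theorem mul_sum_le_of_ofReal_eq_mul_iSup (hn : n ≠ 0) (hS : ∀ x ∈ S, ∃ j : ℤ, x = θ + j / n)
    {g : ℝ → ℝ} (hg : ∀ t, 0 ≤ g t) {α A : ℝ} (hα : 0 ≤ α) (hA : 0 ≤ A)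
    (hαA : ENNReal.ofReal A =
      ENNReal.ofReal α * ⨆ y : ℝ, ∑' j : ℤ, ENNReal.ofReal (g (y + j / n))) (k : ℝ) :
    α * ∑ x ∈ S, g (k - x) ≤ A := by
  rw [← ENNReal.ofReal_le_ofReal_iff hA, ENNReal.ofReal_mul hα,
    ENNReal.ofReal_sum_of_nonneg fun x _ => hg _, hαA]
  gcongr
  exact sum_le_iSup_tsum_of_grid hn hS (fun t => ENNReal.ofReal (g t)) k

theorem sum_exp_neg_le_of_grid (hn : n ≠ 0) (hS : ∀ x ∈ S, ∃ j : ℤ, x = θ + j / n) {b k : ℝ}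
    (hb : 0 < b) (hSk : ∀ x ∈ S, x < k) :
    ∑ x ∈ S, exp (-b * (k - x)) ≤ (1 - exp (-(b / n)))⁻¹ := by
  have hn' : (0 : ℝ) < n := Nat.cast_pos.mpr (Nat.pos_of_ne_zero hn)
  obtain ⟨J, hJS, hJ⟩ :=
    Finset.exists_sum_eq_sum_int_of_grid hn hS fun x => exp (-b * (k - x))
  have hscale : ∀ j : ℤ, -b * (k - (θ - j / n)) = -(b / n) * (n * (k - θ) + j) := fun j => by
    field_simp; ring
  rw [hJ]
  simp only [hscale]
  refine sum_exp_neg_mul_int_le (div_pos hb hn') fun j hj => ?_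
  have : 0 < k - θ + j / n := by linarith [hSk _ (hJS j hj)]
  calc (0 : ℝ) < n * (k - θ + j / n) := mul_pos hn' this
    _ = n * (k - θ) + j := by field_simp

theorem exp_mul_sub_one_le {b c : ℝ} (hb : 0 < b) (hc : 0 ≤ c) (hcb : c ≤ b) (t : ℝ) :
    exp (c * t) - 1 ≤ c / b * (exp (b * t) - 1) := by
  have hcb₁ : c / b ≤ 1 := (div_le_one hb).mpr hcb
  have := convexOn_exp.2 (Set.mem_univ 0) (Set.mem_univ (b * t)) (sub_nonneg.mpr hcb₁)
    (div_nonneg hc hb.le) (sub_add_cancel 1 (c / b))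
  simp only [smul_eq_mul, mul_zero, zero_add, exp_zero, mul_one] at this
  rw [← mul_assoc, div_mul_cancel₀ _ hb.ne'] at this
  linarith

theorem mul_exp_le_add_of_le_exp {x t K₀ c₀ c : ℝ} (hx : 0 ≤ x) (hxt : x ≤ K₀ * exp (-c₀ * t))
    (hc₀ : 0 < c₀) (hc : 0 ≤ c) (hcc₀ : c ≤ c₀ / 2) :
    x * exp (c * t) ≤ x + c * (2 * K₀ / c₀) * exp (-(c₀ / 2) * t) := by
  have hconv := exp_mul_sub_one_le (half_pos hc₀) hc hcc₀ t
  have hcc₀' : 0 ≤ c / (c₀ / 2) := div_nonneg hc (half_pos hc₀).le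
  calc x * exp (c * t) = x + x * (exp (c * t) - 1) := by ring
    _ ≤ x + x * (c / (c₀ / 2) * (exp (c₀ / 2 * t) - 1)) := by gcongr
    _ ≤ x + c / (c₀ / 2) * (x * exp (c₀ / 2 * t)) := by nlinarith [mul_nonneg hcc₀' hx]
    _ ≤ x + c / (c₀ / 2) * (K₀ * exp (-c₀ * t) * exp (c₀ / 2 * t)) := by gcongr
    _ = x + c * (2 * K₀ / c₀) * exp (-(c₀ / 2) * t) := by
      rw [mul_assoc K₀, ← exp_add]; field_simp; ring_nf

theorem sum_mul_exp_le_of_grid (hn : n ≠ 0) (hS : ∀ x ∈ S, ∃ j : ℤ, x = θ + j / n) {k : ℝ}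
    (hSk : ∀ x ∈ S, x < k) {g : ℝ → ℝ} (hg : ∀ t, 0 ≤ g t) {K₀ c₀ c : ℝ} (hK₀ : 0 ≤ K₀)
    (hg_decay : ∀ t, 0 < t → g t ≤ K₀ * exp (-c₀ * t)) (hc₀ : 0 < c₀) (hc : 0 ≤ c)
    (hcc₀ : c ≤ c₀ / 2) :
    ∑ x ∈ S, g (k - x) * exp (c * (k - x)) ≤
      ∑ x ∈ S, g (k - x) + c * (2 * K₀ / c₀ * (1 - exp (-(c₀ / 2 / n)))⁻¹) := by
  calc ∑ x ∈ S, g (k - x) * exp (c * (k - x))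
      ≤ ∑ x ∈ S, (g (k - x) + c * (2 * K₀ / c₀) * exp (-(c₀ / 2) * (k - x))) :=
        Finset.sum_le_sum fun x hx => mul_exp_le_add_of_le_exp (hg _)
          (hg_decay _ (sub_pos.mpr (hSk x hx))) hc₀ hc hcc₀
    _ = ∑ x ∈ S, g (k - x) + c * (2 * K₀ / c₀) * ∑ x ∈ S, exp (-(c₀ / 2) * (k - x)) := by
        rw [Finset.sum_add_distrib, Finset.mul_sum]
    _ ≤ ∑ x ∈ S, g (k - x) + c * (2 * K₀ / c₀) * (1 - exp (-(c₀ / 2 / n)))⁻¹ := by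
        gcongr
        exact sum_exp_neg_le_of_grid hn hS (half_pos hc₀) hSk
    _ = _ := by ring

theorem sum_mul_mul_exp_le_of_grid (hn : n ≠ 0) (hS : ∀ x ∈ S, ∃ j : ℤ, x = θ + j / n) {k : ℝ}
    (hSk : ∀ x ∈ S, x < k) {g : ℝ → ℝ} (hg : ∀ t, 0 ≤ g t) {K₀ c₀ c : ℝ} (hK₀ : 0 ≤ K₀)
    (hg_decay : ∀ t, 0 < t → g t ≤ K₀ * exp (-c₀ * t)) (hc₀ : 0 < c₀) (hc : 0 ≤ c)
    (hcc₀ : c ≤ c₀ / 2) {α A : ℝ} (hα : 0 ≤ α) (hA : 0 ≤ A)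
    (hαA : ENNReal.ofReal A =
      ENNReal.ofReal α * ⨆ y : ℝ, ∑' j : ℤ, ENNReal.ofReal (g (y + j / n))) :
    ∑ x ∈ S, α * g (k - x) * exp (c * (k - x)) ≤
      A + c * (2 * K₀ / c₀ * α * (1 - exp (-(c₀ / 2 / n)))⁻¹) :=
  calc ∑ x ∈ S, α * g (k - x) * exp (c * (k - x))
      = α * ∑ x ∈ S, g (k - x) * exp (c * (k - x)) := by simp only [Finset.mul_sum, mul_assoc]
    _ ≤ α * (∑ x ∈ S, g (k - x) + c * (2 * K₀ / c₀ * (1 - exp (-(c₀ / 2 / n)))⁻¹)) :=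
      mul_le_mul_of_nonneg_left (sum_mul_exp_le_of_grid hn hS hSk hg hK₀ hg_decay hc₀ hc hcc₀) hα
    _ = α * ∑ x ∈ S, g (k - x) + c * (2 * K₀ / c₀ * α * (1 - exp (-(c₀ / 2 / n)))⁻¹) := by ring
    _ ≤ A + c * (2 * K₀ / c₀ * α * (1 - exp (-(c₀ / 2 / n)))⁻¹) := by
      gcongr
      exact mul_sum_le_of_ofReal_eq_mul_iSup hn hS hg hα hA hαA k

end Grid

theorem Set.ncard_inter_Ioc_lt_of_lt_s10 {U : Set ℝ} {a b x : ℝ} (hfin : (U ∩ Set.Ioc a b).Finite)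
    (hb : b ∈ U) (hab : a < b) (hxb : x < b) :
    (U ∩ Set.Ioc a x).ncard < (U ∩ Set.Ioc a b).ncard :=
  Set.ncard_lt_ncard ((Set.ssubset_iff_of_subset
    (Set.inter_subset_inter_right _ (Set.Ioc_subset_Ioc_right hxb.le))).mpr
      ⟨b, ⟨hb, hab, le_rfl⟩, fun h => (h.2.2.trans_lt hxb).false⟩) hfin

theorem coeff_mul_exp_le {P : Type*} [Fintype P] [DecidableEq P] {D : P → Set ℝ}
    (hfin : ∀ u v : ℝ, u < v → ((⋃ p, D p) ∩ Set.Ioc u v).Finite)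
    {κ : P → P → ℝ → ℝ} (hκ : ∀ p q t, 0 ≤ κ p q t) {co : P → ℝ → P → ℝ → ℝ}
    (hco_diag : ∀ p p' k, k ∈ D p → k ∈ D p' → co p k p' k = if p = p' then 1 else 0)
    (hco_rec : ∀ p k p' k', k ∈ D p → k' ∈ D p' → k' < k →
      co p k p' k' = ∑ q, ∑ᶠ x ∈ D q ∩ Set.Ico k' k, κ p q (k - x) * co q x p' k')
    {c : ℝ} {M : Matrix P P ℝ}
    (hM : ∀ p q k (S : Finset ℝ), (∀ x ∈ S, x ∈ D q ∧ x < k) →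
      ∑ x ∈ S, κ p q (k - x) * exp (c * (k - x)) ≤ M p q)
    {w : P → ℝ} (hw : ∀ p, 0 < w p) (hMw : M *ᵥ w ≤ w)
    {p p' : P} {k k' : ℝ} (hk : k ∈ D p) (hk' : k' ∈ D p') (hkk' : k' ≤ k) :
    co p k p' k' * exp (c * (k - k')) ≤ w p / w p' := by
  suffices ∀ N, ∀ p k, k ∈ D p → k' ≤ k → ((⋃ q, D q) ∩ Set.Ioc k' k).ncard = N →
      co p k p' k' * exp (c * (k - k')) ≤ w p / w p' from this _ p k hk hkk' rfl
  intro N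
  induction N using Nat.strong_induction_on with | _ N ih => ?_
  intro p k hk hkk' hN
  rcases hkk'.eq_or_lt with rfl | hlt
  · rw [sub_self, mul_zero, exp_zero, mul_one, hco_diag _ _ _ hk hk']
    split_ifs with hpp
    · rw [hpp, div_self (hw p').ne']
    · exact div_nonneg (hw p).le (hw p').le
  have hT : ∀ q, (D q ∩ Set.Ico k' k).Finite := fun q =>
    ((hfin k' k hlt).insert k').subset fun x ⟨hxD, hx'x, hxk⟩ =>
      hx'x.eq_or_lt.elim (fun h => .inl h.symm) fun h =>
        .inr ⟨Set.mem_iUnion.mpr ⟨q, hxD⟩, h, hxk.le⟩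
  have hterm : ∀ q, ∀ x ∈ (hT q).toFinset,
      κ p q (k - x) * co q x p' k' * exp (c * (k - k')) ≤
        κ p q (k - x) * exp (c * (k - x)) * (w q / w p') := fun q x hx => by
    obtain ⟨hxD, hx'x, hxk⟩ := (hT q).mem_toFinset.mp hx
    have hIH := ih _ (hN ▸ Set.ncard_inter_Ioc_lt_of_lt_s10 (hfin k' k hlt)
      (Set.mem_iUnion.mpr ⟨p, hk⟩) hlt hxk) q x hxD hx'x rfl
    calc κ p q (k - x) * co q x p' k' * exp (c * (k - k'))
        = κ p q (k - x) * exp (c * (k - x)) * (co q x p' k' * exp (c * (x - k'))) := by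
          rw [show c * (k - k') = c * (k - x) + c * (x - k') by ring, exp_add]; ring
      _ ≤ κ p q (k - x) * exp (c * (k - x)) * (w q / w p') :=
          mul_le_mul_of_nonneg_left hIH (mul_nonneg (hκ p q _) (exp_pos _).le)
  rw [hco_rec p k p' k' hk hk' hlt, Finset.sum_mul]
  calc ∑ q, (∑ᶠ x ∈ D q ∩ Set.Ico k' k, κ p q (k - x) * co q x p' k') * exp (c * (k - k'))
      ≤ ∑ q, M p q * (w q / w p') := Finset.sum_le_sum fun q _ => by
        rw [finsum_mem_eq_finite_toFinset_sum _ (hT q), Finset.sum_mul]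
        refine (Finset.sum_le_sum (hterm q)).trans ?_
        rw [← Finset.sum_mul]
        exact mul_le_mul_of_nonneg_right (hM p q k _ fun x hx =>
          ⟨((hT q).mem_toFinset.mp hx).1, ((hT q).mem_toFinset.mp hx).2.2⟩)
          (div_nonneg (hw q).le (hw p').le)
    _ = (M *ᵥ w) p / w p' := by simp only [Matrix.mulVec, dotProduct, Finset.sum_div, mul_div_assoc]
    _ ≤ w p / w p' := div_le_div_of_nonneg_right (hMw p) (hw p').le

theorem stmt_10_general
    {P : Type*} [Fintype P] [DecidableEq P]
    (n : P → ℕ) (hn : ∀ p, 1 ≤ n p)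
    (θ : P → ℝ)
    (D : P → Set ℝ)
    (hD : ∀ p, D p = {k : ℝ | ∃ j : ℤ, k = θ p + (j : ℝ) / (n p : ℝ)})
    (hfin : ∀ u v : ℝ, u < v → ((⋃ p, D p) ∩ Set.Ioc u v).Finite)
    (a : P → P → ℝ) (ha : ∀ p p', 0 ≤ a p p')
    (h : P → P → ℝ → ℝ) (hh : ∀ p p' x, 0 ≤ h p p' x)
    -- the coefficients `c(p,k;p',k')`, characterized by the well-founded recursion
    (co : P → ℝ → P → ℝ → ℝ)
    (hco_diag : ∀ p p' k, k ∈ D p → k ∈ D p' → co p k p' k = if p = p' then 1 else 0)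
    (hco_rec : ∀ p k p' k', k ∈ D p → k' ∈ D p' → k' < k →
      co p k p' k' = ∑ p'' : P, ∑ᶠ k'' ∈ D p'' ∩ Set.Ico k' k,
        a p p'' * h p p'' (k - k'') * co p'' k'' p' k')
    -- the matrix `H` of the interaction norms: its entries are finite reals
    (Hm : Matrix P P ℝ) (hHm0 : ∀ p p', 0 ≤ Hm p p')
    (hHm : ∀ p p', ENNReal.ofReal (Hm p p') =
      ENNReal.ofReal (a p p') *
        ⨆ x : ℝ, ∑' j : ℤ, ENNReal.ofReal (h p p' (x + (j : ℝ) / (n p' : ℝ))))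
    -- the spectral radius of `H` is strictly less than 1
    (hspec : spectralRadius ℂ (Hm.map (algebraMap ℝ ℂ)) < 1)
    -- exponential tails of the interaction functions
    (K₀ c₀ : ℝ) (hK₀ : 0 < K₀) (hc₀ : 0 < c₀)
    (hdecay : ∀ (p p' : P) (x : ℝ), 0 < x → h p p' x ≤ K₀ * Real.exp (-c₀ * x)) :
    ∃ K c : ℝ, 0 < K ∧ 0 < c ∧
      ∀ (p : P) (k : ℝ) (p' : P) (k' : ℝ), k ∈ D p → k' ∈ D p' → k' ≤ k →
        co p k p' k' ≤ K * Real.exp (-c * (k - k')) := by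
  obtain ⟨w, hw, hHw⟩ := Matrix.exists_pos_mulVec_lt_of_spectralRadius_lt_one hHm0 hspec
  obtain ⟨C, hC⟩ : ∃ C : Matrix P P ℝ,
      ∀ p q, C p q = 2 * K₀ / c₀ * a p q * (1 - exp (-(c₀ / 2 / n q)))⁻¹ :=
    ⟨.of fun p q => 2 * K₀ / c₀ * a p q * (1 - exp (-(c₀ / 2 / n q)))⁻¹, fun _ _ => rfl⟩
  obtain ⟨c, hc, hcc₀, hMw⟩ := Matrix.exists_pos_add_smul_mulVec_le hHw C (half_pos hc₀)
  have hM : ∀ p q k (S : Finset ℝ), (∀ x ∈ S, x ∈ D q ∧ x < k) →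
      ∑ x ∈ S, a p q * h p q (k - x) * exp (c * (k - x)) ≤ (Hm + c • C) p q :=
    fun p q k S hS => by
      rw [Matrix.add_apply, Matrix.smul_apply, smul_eq_mul, hC]
      exact sum_mul_mul_exp_le_of_grid (Nat.one_le_iff_ne_zero.mp (hn q))
        (fun x hx => by simpa [hD] using (hS x hx).1) (fun x hx => (hS x hx).2) (hh p q) hK₀.le
        (hdecay p q) hc₀ hc.le hcc₀ (ha p q) (hHm0 p q) (hHm p q)
  obtain ⟨K, hK⟩ := Finite.exists_le fun pp : P × P => w pp.1 / w pp.2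
  refine ⟨max K 1, c, by positivity, hc, fun p k p' k' hk hk' hkk' => ?_⟩
  have hdecay_coeff := coeff_mul_exp_le (κ := fun p q t => a p q * h p q t) hfin
    (fun p q t => mul_nonneg (ha p q) (hh p q t)) hco_diag hco_rec hM hw hMw hk hk' hkk'
  rw [neg_mul, Real.exp_neg, ← div_eq_mul_inv, le_div_iff₀ (exp_pos _)]
  exact hdecay_coeff.trans ((hK (p, p')).trans (le_max_left _ _))

/-- **Proposition 6.1, first part.** Exponential decay of the coefficients. -/
theorem stmt_10
    {P : Type*} [Fintype P] [Nonempty P] [DecidableEq P]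
    (n : P → ℕ) (hn : ∀ p, 1 ≤ n p)
    (θ : P → ℝ) (hθ0 : ∀ p, 0 ≤ θ p) (hθ1 : ∀ p, θ p < 1 / (n p : ℝ))
    (D : P → Set ℝ)
    (hD : ∀ p, D p = {k : ℝ | ∃ j : ℤ, k = θ p + (j : ℝ) / (n p : ℝ)})
    (hfin : ∀ u v : ℝ, u < v → ((⋃ p, D p) ∩ Set.Ioc u v).Finite)
    (a : P → P → ℝ) (ha : ∀ p p', 0 ≤ a p p')
    (h : P → P → ℝ → ℝ) (hh : ∀ p p' x, 0 ≤ h p p' x)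
    (hh0 : ∀ p p' x, x ≤ 0 → h p p' x = 0)
    -- the coefficients `c(p,k;p',k')`, characterized by the well-founded recursion
    (co : P → ℝ → P → ℝ → ℝ)
    (hco_nonneg : ∀ p k p' k', k ∈ D p → k' ∈ D p' → k' ≤ k → 0 ≤ co p k p' k')
    (hco_diag : ∀ p p' k, k ∈ D p → k ∈ D p' → co p k p' k = if p = p' then 1 else 0)
    (hco_rec : ∀ p k p' k', k ∈ D p → k' ∈ D p' → k' < k →
      co p k p' k' = ∑ p'' : P, ∑ᶠ k'' ∈ D p'' ∩ Set.Ico k' k,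
        a p p'' * h p p'' (k - k'') * co p'' k'' p' k')
    -- the matrix `H` of the interaction norms: its entries are finite reals
    (Hm : Matrix P P ℝ) (hHm0 : ∀ p p', 0 ≤ Hm p p')
    (hHm : ∀ p p', ENNReal.ofReal (Hm p p') =
      ENNReal.ofReal (a p p') *
        ⨆ x : ℝ, ∑' j : ℤ, ENNReal.ofReal (h p p' (x + (j : ℝ) / (n p' : ℝ))))
    -- the spectral radius of `H` is strictly less than 1
    (hspec : spectralRadius ℂ (Hm.map (algebraMap ℝ ℂ)) < 1)
    -- exponential tails of the interaction functions
    (K₀ c₀ : ℝ) (hK₀ : 0 < K₀) (hc₀ : 0 < c₀)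
    (hdecay : ∀ (p p' : P) (x : ℝ), 0 < x → h p p' x ≤ K₀ * Real.exp (-c₀ * x)) :
    ∃ K c : ℝ, 0 < K ∧ 0 < c ∧
      ∀ (p : P) (k : ℝ) (p' : P) (k' : ℝ), k ∈ D p → k' ∈ D p' → k' ≤ k →
        co p k p' k' ≤ K * Real.exp (-c * (k - k')) :=
  stmt_10_general n hn θ D hD hfin a ha h hh co hco_diag hco_rec Hm hHm0 hHm hspec K₀ c₀ hK₀ hc₀
    hdecay
end

section
/- Exponential decay of the cluster functions (Proposition 6.1, second part): Assume in addition that there exist constants K₀, c₀ > 0 such that h^p_{p'}(x) ≤ K₀e^{−c₀x}, h^m_{m'}(x) ≤ K₀e^{−c₀x}, h^m_p(x) ≤ K₀e^{−c₀x} and h^p_m(x) ≤ K₀e^{−c₀x} for all m, m' ∈ M, all p, p' ∈ P and all x > 0. Then there exist constants K, c > 0 such that for all m, m' ∈ M and all reals s < t, 𝔥^m_{m'}(s,t) ≤ K e^{−c(t−s)}. -/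
/-
The coefficients `c(p,k;p',k')` solve a discrete renewal equation driven by the kernel
`a^p_{p''} h^p_{p''}`. As `H ≥ 0` and `ρ(H) < 1`, Gelfand's formula gives `v ≥ 0` and `δ > 0` with
`H v + δ ≤ v`. Tilting the kernel by `e^{ε(k - k'')}` changes the row sums of `H` only a little:
by the factor `e^{εT}` on the part `k - k'' ≤ T`, and by the exponential tail of `h` beyond `T`,
which is small once `T` is large. So for small `ε > 0` a multiple of `v` is still a supersolution
of the tilted equation, and induction along the locally finite set of lattice points bounds the
tilted sums `Σ c(p,k;p',k') e^{ε(k - k')}` uniformly. In the cluster function the decay of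
`h^m_p` and `h^{p'}_{m'}` then leaves `e^{-ε(t - s)}` times a geometric series.
-/

open scoped BigOperators ENNReal Matrix

open Real Finset Filter Topology

section Resolvent

variable {α P : Type*} [LinearOrder α] [Fintype P]

theorem sum_filter_le_eq_sum_filter_lt_add {M : Type*} [AddCommMonoid M] (s : Finset α) (k : α)
    (f : α → M) :
    ∑ x ∈ s with x ≤ k, f x = ∑ x ∈ s with x < k, f x + if k ∈ s then f k else 0 := by
  rw [← Finset.sum_filter_add_sum_filter_not _ (· < k), Finset.filter_filter, Finset.filter_filter]
  congr 1
  · exact Finset.sum_congr (Finset.filter_congr fun x _ => by simpa using le_of_lt) fun _ _ => rfl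
  · rw [Finset.filter_congr (q := (· = k)) fun x _ => by simp [le_antisymm_iff, and_comm],
      Finset.filter_eq']
    split_ifs <;> simp

def totalMass (W : P → Finset α) (c : P → α → P → α → ℝ) (p : P) (k : α) : ℝ :=
  ∑ p', ∑ k' ∈ W p' with k' ≤ k, c p k p' k'

theorem sum_le_totalMass {W : P → Finset α} {c : P → α → P → α → ℝ} {p p' : P} {k : α}
    {F : Finset α} (hF : F ⊆ {k' ∈ W p' | k' ≤ k})
    (hc0 : ∀ q, ∀ k' ∈ W q, k' ≤ k → 0 ≤ c p k q k') :
    ∑ k' ∈ F, c p k p' k' ≤ totalMass W c p k := by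
  have hnonneg : ∀ q k', k' ∈ {x ∈ W q | x ≤ k} → 0 ≤ c p k q k' := fun q k' hk' =>
    hc0 q k' (Finset.mem_filter.1 hk').1 (Finset.mem_filter.1 hk').2
  calc ∑ k' ∈ F, c p k p' k' ≤ ∑ k' ∈ W p' with k' ≤ k, c p k p' k' :=
        Finset.sum_le_sum_of_subset_of_nonneg hF fun k' hk' _ => hnonneg p' k' hk'
    _ ≤ totalMass W c p k :=
        Finset.single_le_sum (f := fun q => ∑ k' ∈ W q with k' ≤ k, c p k q k')
          (fun q _ => Finset.sum_nonneg (hnonneg q)) (Finset.mem_univ p')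

variable [DecidableEq P]

/- `c p k p' k'` is the paper's `c(p,k;p',k')` for lattice points in a finite window `W`,
and `A p p'' k k''` plays the role of `a^p_{p''} h^p_{p''}(k - k'')`. -/
structure IsResolvent (W : P → Finset α) (A : P → P → α → α → ℝ)
    (c : P → α → P → α → ℝ) : Prop where
  diag : ∀ p p' k, k ∈ W p → k ∈ W p' → c p k p' k = if p = p' then 1 else 0
  off_diag : ∀ p p' k k', k ∈ W p → k' ∈ W p' → k' < k →
    c p k p' k' = ∑ p'', ∑ k'' ∈ W p'' with k' ≤ k'' ∧ k'' < k, A p p'' k k'' * c p'' k'' p' k'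

variable {W : P → Finset α} {A : P → P → α → α → ℝ} {c : P → α → P → α → ℝ}

theorem IsResolvent.sum_diag (hc : IsResolvent W A c) {p : P} {k : α} (hk : k ∈ W p) :
    ∑ p', (if k ∈ W p' then c p k p' k else 0) = 1 := by
  rw [Finset.sum_eq_single p (fun p' _ hp' => ?_) (by simp), if_pos hk, hc.diag p p k hk hk,
    if_pos rfl]
  split_ifs with hkp'
  · rw [hc.diag p p' k hk hkp', if_neg (Ne.symm hp')]
  · rfl

theorem IsResolvent.totalMass_eq (hc : IsResolvent W A c) {p : P} {k : α} (hk : k ∈ W p) :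
    totalMass W c p k =
      1 + ∑ p'', ∑ k'' ∈ W p'' with k'' < k, A p p'' k k'' * totalMass W c p'' k'' := by
  have hswap : ∀ p' p'', ∑ k' ∈ W p' with k' < k, ∑ k'' ∈ W p'' with k' ≤ k'' ∧ k'' < k,
      A p p'' k k'' * c p'' k'' p' k' =
      ∑ k'' ∈ W p'' with k'' < k, ∑ k' ∈ W p' with k' ≤ k'', A p p'' k k'' * c p'' k'' p' k' := by
    intro p' p''
    refine Finset.sum_comm' fun k' k'' => ?_
    simp only [Finset.mem_filter]
    constructor
    · rintro ⟨⟨h1, -⟩, h2, h3, h4⟩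
      exact ⟨⟨h1, h3⟩, h2, h4⟩
    · rintro ⟨⟨h1, h3⟩, h2, h4⟩
      exact ⟨⟨h1, h3.trans_lt h4⟩, h2, h3, h4⟩
  have hsplit : totalMass W c p k = ∑ p', ∑ k' ∈ W p' with k' < k, c p k p' k' + 1 := by
    rw [totalMass]
    simp only [sum_filter_le_eq_sum_filter_lt_add, Finset.sum_add_distrib, hc.sum_diag hk]
  rw [hsplit, add_comm]
  congr 1
  calc ∑ p', ∑ k' ∈ W p' with k' < k, c p k p' k'
      = ∑ p', ∑ p'', ∑ k' ∈ W p' with k' < k, ∑ k'' ∈ W p'' with k' ≤ k'' ∧ k'' < k,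
          A p p'' k k'' * c p'' k'' p' k' := by
        refine Finset.sum_congr rfl fun p' _ => ?_
        rw [Finset.sum_comm]
        refine Finset.sum_congr rfl fun k' hk' => ?_
        rw [Finset.mem_filter] at hk'
        exact hc.off_diag p p' k k' hk hk'.1 hk'.2
    _ = _ := by
        rw [Finset.sum_comm]
        refine Finset.sum_congr rfl fun p'' _ => ?_
        simp only [hswap, totalMass, Finset.mul_sum]
        exact Finset.sum_comm

theorem IsResolvent.totalMass_le (hc : IsResolvent W A c) (hA : ∀ p p'' k k'', 0 ≤ A p p'' k k'')
    {B : Matrix P P ℝ}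
    (hrow : ∀ p p'' k, k ∈ W p → ∑ k'' ∈ W p'' with k'' < k, A p p'' k k'' ≤ B p p'')
    {w : P → ℝ} (hw0 : 0 ≤ w) (hw : ∀ p, 1 + (B *ᵥ w) p ≤ w p) {p : P} {k : α} (hk : k ∈ W p) :
    totalMass W c p k ≤ w p := by
  have hwf : (↑(Finset.univ.biUnion W) : Set α).WellFoundedOn (· < ·) :=
    (Finset.finite_toSet _).wellFoundedOn
  refine hwf.induction (P := fun k => ∀ p, k ∈ W p → totalMass W c p k ≤ w p)
    (by simpa using ⟨p, hk⟩) (fun k _ ih p hk => ?_) p hk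
  have hmass : ∀ p'', ∀ k'' ∈ W p'', k'' < k → totalMass W c p'' k'' ≤ w p'' :=
    fun p'' k'' hk'' hlt => ih k'' (by simpa using ⟨p'', hk''⟩) hlt p'' hk''
  calc totalMass W c p k
      = 1 + ∑ p'', ∑ k'' ∈ W p'' with k'' < k, A p p'' k k'' * totalMass W c p'' k'' :=
        hc.totalMass_eq hk
    _ ≤ 1 + ∑ p'', (∑ k'' ∈ W p'' with k'' < k, A p p'' k k'') * w p'' := by
        gcongr with p''
        rw [Finset.sum_mul]
        refine Finset.sum_le_sum fun k'' hk'' => ?_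
        rw [Finset.mem_filter] at hk''
        exact mul_le_mul_of_nonneg_left (hmass p'' k'' hk''.1 hk''.2) (hA _ _ _ _)
    _ ≤ 1 + (B *ᵥ w) p := by
        simp only [Matrix.mulVec, dotProduct]
        gcongr with p''
        · exact hw0 p''
        · exact hrow p p'' k hk
    _ ≤ w p := hw p

theorem IsResolvent.tilt {W : P → Finset ℝ} {A : P → P → ℝ → ℝ → ℝ} {c : P → ℝ → P → ℝ → ℝ}
    (hc : IsResolvent W A c) (ε : ℝ) :
    IsResolvent W (fun p p'' k k'' => A p p'' k k'' * exp (ε * (k - k'')))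
      (fun p k p' k' => c p k p' k' * exp (ε * (k - k'))) where
  diag p p' k hk hk' := by simp [hc.diag p p' k hk hk']
  off_diag p p' k k' hk hk' hlt := by
    rw [hc.off_diag p p' k k' hk hk' hlt, Finset.sum_mul]
    refine Finset.sum_congr rfl fun p'' _ => ?_
    rw [Finset.sum_mul]
    refine Finset.sum_congr rfl fun k'' _ => ?_
    rw [show ε * (k - k') = ε * (k - k'') + ε * (k'' - k') by ring, exp_add]
    ring

end Resolvent

section SpectralRadius

attribute [local instance] Matrix.linftyOpNormedRing Matrix.linftyOpNormedAlgebra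

variable {P : Type*} [Fintype P] [DecidableEq P]

theorem Matrix.exists_pow_mulVec_one_le_of_spectralRadius_lt_one {H : Matrix P P ℝ}
    (hH : ∀ i j, 0 ≤ H i j) (hρ : spectralRadius ℂ (H.map (algebraMap ℝ ℂ)) < 1) :
    ∃ N : ℕ, ∃ ρ < 1, ∀ p, (H ^ N *ᵥ 1) p ≤ ρ := by
  have : CompleteSpace (Matrix P P ℂ) := FiniteDimensional.complete ℂ _
  set Hc := H.map (algebraMap ℝ ℂ)
  obtain ⟨N, hN, hN1⟩ := ((spectrum.pow_nnnorm_pow_one_div_tendsto_nhds_spectralRadius Hc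
    |>.eventually_lt_const hρ).and (eventually_ge_atTop 1)).exists
  have hnorm : ‖Hc ^ N‖₊ < 1 := by
    by_contra! hge
    exact hN.not_ge (ENNReal.one_le_rpow (by exact_mod_cast hge) (by positivity))
  refine ⟨N, ‖Hc ^ N‖, by exact_mod_cast hnorm, fun p => ?_⟩
  have hrow : ∑ q, ‖(Hc ^ N) p q‖₊ ≤ ‖Hc ^ N‖₊ := by
    rw [Matrix.linfty_opNNNorm_def]
    exact Finset.le_sup (f := fun i => ∑ j, ‖(Hc ^ N) i j‖₊) (Finset.mem_univ p)
  calc (H ^ N *ᵥ 1) p = ∑ q, ‖(Hc ^ N) p q‖ := by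
        rw [← Matrix.map_pow H (algebraMap ℝ ℂ)]
        simp [Matrix.mulVec, dotProduct, abs_of_nonneg (Matrix.pow_apply_nonneg hH N p _)]
    _ ≤ ‖Hc ^ N‖ := by simpa using NNReal.coe_le_coe.2 hrow

end SpectralRadius

theorem Matrix.exists_mulVec_add_le_of_spectralRadius_lt_one {P : Type*} [Fintype P] [DecidableEq P]
    {H : Matrix P P ℝ} (hH : ∀ i j, 0 ≤ H i j)
    (hρ : spectralRadius ℂ (H.map (algebraMap ℝ ℂ)) < 1) :
    ∃ v : P → ℝ, 0 ≤ v ∧ ∃ δ > 0, ∀ p, (H *ᵥ v) p + δ ≤ v p := by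
  obtain ⟨N, ρ, hρ1, hN⟩ := exists_pow_mulVec_one_le_of_spectralRadius_lt_one hH hρ
  set S := ∑ i ∈ range N, H ^ i
  have hHS : H * S = S + H ^ N - 1 := by
    have := mul_geom_sum H N
    rw [sub_mul, one_mul, sub_eq_iff_eq_add] at this
    rw [this]
    abel
  refine ⟨S *ᵥ 1, fun p => ?_, 1 - ρ, sub_pos.2 hρ1, fun p => ?_⟩
  · simp only [S, Matrix.sum_mulVec, Finset.sum_apply, Pi.zero_apply]
    exact Finset.sum_nonneg fun i _ => Finset.sum_nonneg fun q _ => by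
      simpa using Matrix.pow_apply_nonneg hH i p q
  · rw [Matrix.mulVec_mulVec, hHS, Matrix.sub_mulVec, Matrix.add_mulVec, Matrix.one_mulVec]
    simp only [Pi.sub_apply, Pi.add_apply, Pi.one_apply]
    linarith [hN p]

theorem exists_exp_perturbation_le {P : Type*} [Finite P] {x y v : P → ℝ} {δ c : ℝ} (hδ : 0 < δ)
    (hc : 0 < c) (hxv : ∀ p, x p + δ ≤ v p) :
    ∃ T ε, 0 < ε ∧ ε ≤ c ∧ ∀ p, exp (ε * T) * x p + exp (-c * T) * y p + δ / 2 ≤ v p := by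
  have htail : ∀ p, Tendsto (fun T => exp (-c * T) * y p) atTop (𝓝 0) := fun p => by
    simpa using (tendsto_exp_atBot.comp
      (tendsto_id.const_mul_atTop_of_neg (neg_neg_of_pos hc))).mul_const (y p)
  obtain ⟨T, hT⟩ := (eventually_all.2 fun p =>
    (htail p).eventually (gt_mem_nhds (by positivity : (0 : ℝ) < δ / 4))).exists
  have hhead : ∀ p, Tendsto (fun ε => exp (ε * T) * x p) (𝓝 0) (𝓝 (x p)) := fun p => by
    simpa using ((continuous_exp.comp (continuous_id.mul continuous_const)).mul
      continuous_const).tendsto (0 : ℝ) (f := fun ε => exp (ε * T) * x p)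
  obtain ⟨ε, hεx, ⟨hε0, hεc⟩⟩ := ((eventually_all.2 fun p => (hhead p).eventually
    (gt_mem_nhds (by linarith : x p < x p + δ / 4)))
    |>.filter_mono nhdsWithin_le_nhds |>.and (Ioc_mem_nhdsGT hc)).exists
  exact ⟨T, ε, hε0, hεc, fun p => by linarith [hεx p, hT p, hxv p]⟩

theorem exists_perturbed_supersolution {P : Type*} [Fintype P] [DecidableEq P]
    {H : Matrix P P ℝ} (hH : ∀ i j, 0 ≤ H i j)
    (hρ : spectralRadius ℂ (H.map (algebraMap ℝ ℂ)) < 1) (E : Matrix P P ℝ) {c : ℝ} (hc : 0 < c) :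
    ∃ T ε, 0 < ε ∧ ε ≤ c ∧ ∃ w : P → ℝ, 0 ≤ w ∧
      ∀ p, 1 + ((exp (ε * T) • H + exp (-c * T) • E) *ᵥ w) p ≤ w p := by
  obtain ⟨v, hv0, δ, hδ, hv⟩ := Matrix.exists_mulVec_add_le_of_spectralRadius_lt_one hH hρ
  obtain ⟨T, ε, hε, hεc, hTε⟩ := exists_exp_perturbation_le (y := E *ᵥ v) hδ hc hv
  refine ⟨T, ε, hε, hεc, (2 / δ) • v, smul_nonneg (by positivity) hv0, fun p => ?_⟩
  have := mul_le_mul_of_nonneg_left (hTε p) (by positivity : (0 : ℝ) ≤ 2 / δ)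
  simp only [Matrix.mulVec_smul, Matrix.add_mulVec, Matrix.smul_mulVec, Pi.add_apply,
    Pi.smul_apply, smul_eq_mul] at this ⊢
  field_simp at this ⊢
  linarith

theorem ofReal_sum_le_iSup_tsum {f : ℝ → ℝ} (hf : ∀ x, 0 ≤ f x) {n : ℕ} (hn : 0 < n)
    (θ k : ℝ) {F : Finset ℝ} (hF : ∀ x ∈ F, ∃ j : ℤ, x = θ + j / n) :
    ENNReal.ofReal (∑ x ∈ F, f (k - x)) ≤ ⨆ y : ℝ, ∑' j : ℤ, ENNReal.ofReal (f (y + j / n)) := by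
  have hn' : (n : ℝ) ≠ 0 := by positivity
  set g : ℤ → ℝ := fun j => θ - j / n
  have hg : Function.Injective g := fun i j hij => by
    simpa [g, hn'] using hij
  have hFg : ∀ x ∈ F, x ∉ Set.range g → f (k - x) = 0 := fun x hx hxg => by
    obtain ⟨j, rfl⟩ := hF x hx
    exact (hxg ⟨-j, by simp [g]; ring⟩).elim
  rw [← Finset.sum_preimage g F hg.injOn (fun x => f (k - x)) hFg,
    ENNReal.ofReal_sum_of_nonneg fun _ _ => hf _]
  calc ∑ j ∈ F.preimage g hg.injOn, ENNReal.ofReal (f (k - g j))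
      = ∑ j ∈ F.preimage g hg.injOn, ENNReal.ofReal (f ((k - θ) + j / n)) := by
        simp only [g, sub_sub_eq_add_sub, add_sub_right_comm]
    _ ≤ ∑' j : ℤ, ENNReal.ofReal (f ((k - θ) + j / n)) := ENNReal.sum_le_tsum _
    _ ≤ _ := le_iSup (fun y : ℝ => ∑' j : ℤ, ENNReal.ofReal (f (y + j / n))) (k - θ)

theorem sum_exp_neg_le {b : ℝ} (hb : 0 < b) {n : ℕ} (hn : 0 < n) {θ T k : ℝ} {F : Finset ℝ}
    (hF : ∀ x ∈ F, (∃ j : ℤ, x = θ + j / n) ∧ T < k - x) :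
    ∑ x ∈ F, exp (-b * (k - x)) ≤ exp (-b * T) * (1 - exp (-b / n))⁻¹ := by
  have hn' : (0 : ℝ) < n := by exact_mod_cast hn
  set q := exp (-b / n)
  have hq1 : q < 1 := exp_lt_one_iff.2 (div_neg_of_neg_of_pos (neg_neg_of_pos hb) hn')
  set g : ℝ → ℕ := fun x => ⌊(k - x - T) * n⌋₊
  have hterm : ∀ x ∈ F, exp (-b * (k - x)) ≤ exp (-b * T) * q ^ g x := fun x hx => by
    have hpos : 0 ≤ (k - x - T) * n := by nlinarith [(hF x hx).2]
    have hgx : (g x : ℝ) / n ≤ k - x - T := (div_le_iff₀ hn').2 (Nat.floor_le hpos)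
    rw [← exp_nat_mul, ← exp_add]
    apply exp_le_exp.2
    have : (g x : ℝ) * (-b / n) = -b * (g x / n) := by ring
    nlinarith
  -- the numbers `(k - x - T) * n`, `x ∈ F`, lie in one coset of `ℤ`
  have hinj : Set.InjOn g F := fun x hx y hy hxy => by
    obtain ⟨⟨i, rfl⟩, hTx⟩ := hF x hx
    obtain ⟨⟨j, rfl⟩, hTy⟩ := hF y hy
    have key : ∀ m : ℤ, T < k - (θ + m / n) →
        (⌊(k - (θ + m / n) - T) * n⌋₊ : ℤ) = ⌊(k - θ - T) * n⌋ - m := fun m hm => by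
      rw [Int.natCast_floor_eq_floor (by nlinarith), ← Int.floor_sub_intCast]
      congr 1
      field_simp
      ring
    have := congrArg (Nat.cast : ℕ → ℤ) hxy
    dsimp only [g] at this
    rw [key i hTx, key j hTy] at this
    rw [show i = j by omega]
  calc ∑ x ∈ F, exp (-b * (k - x)) ≤ ∑ x ∈ F, exp (-b * T) * q ^ g x := sum_le_sum hterm
    _ = exp (-b * T) * ∑ i ∈ F.image g, q ^ i := by rw [Finset.sum_image hinj, Finset.mul_sum]
    _ ≤ exp (-b * T) * (1 - q)⁻¹ := by
        gcongr
        rw [← tsum_geometric_of_lt_one (exp_pos _).le hq1]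
        exact (summable_geometric_of_lt_one (exp_pos _).le hq1).sum_le_tsum _
          fun i _ => pow_nonneg (exp_pos _).le i

theorem sum_mul_exp_le {f : ℝ → ℝ} (hf : ∀ x, 0 ≤ f x) {n : ℕ} (hn : 0 < n) {A Hval : ℝ}
    (hA : 0 ≤ A) (hHval : 0 ≤ Hval)
    (hnorm : ENNReal.ofReal Hval =
      ENNReal.ofReal A * ⨆ y : ℝ, ∑' j : ℤ, ENNReal.ofReal (f (y + j / n)))
    {K₀ c₀ : ℝ} (hK₀ : 0 ≤ K₀) (hc₀ : 0 < c₀) (hdecay : ∀ x, 0 < x → f x ≤ K₀ * exp (-c₀ * x))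
    {ε : ℝ} (hε : 0 ≤ ε) (hεc : ε ≤ c₀ / 2) (T : ℝ) {θ k : ℝ} {F : Finset ℝ}
    (hF : ∀ x ∈ F, (∃ j : ℤ, x = θ + j / n) ∧ x < k) :
    ∑ x ∈ F, A * f (k - x) * exp (ε * (k - x)) ≤
      exp (ε * T) * Hval + exp (-(c₀ / 2) * T) * (A * K₀ * (1 - exp (-(c₀ / 2) / n))⁻¹) := by
  rw [← Finset.sum_filter_add_sum_filter_not F (fun x => k - x ≤ T)]
  gcongr ?_ + ?_
  · have hnear : A * ∑ x ∈ F with k - x ≤ T, f (k - x) ≤ Hval := by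
      rw [← ENNReal.ofReal_le_ofReal_iff hHval, hnorm, ENNReal.ofReal_mul hA]
      gcongr
      exact ofReal_sum_le_iSup_tsum hf hn θ k fun x hx => (hF x (Finset.mem_filter.1 hx).1).1
    calc ∑ x ∈ F with k - x ≤ T, A * f (k - x) * exp (ε * (k - x))
        ≤ ∑ x ∈ F with k - x ≤ T, exp (ε * T) * (A * f (k - x)) := by
          refine Finset.sum_le_sum fun x hx => ?_
          rw [mul_comm (exp _)]
          gcongr
          · exact mul_nonneg hA (hf _)
          · exact (Finset.mem_filter.1 hx).2
      _ ≤ exp (ε * T) * Hval := by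
          rw [← Finset.mul_sum, ← Finset.mul_sum]
          gcongr
  · calc ∑ x ∈ F with ¬k - x ≤ T, A * f (k - x) * exp (ε * (k - x))
        ≤ ∑ x ∈ F with ¬k - x ≤ T, A * K₀ * exp (-(c₀ / 2) * (k - x)) := by
          refine Finset.sum_le_sum fun x hx => ?_
          have hx : 0 < k - x := sub_pos.2 (hF x (Finset.mem_filter.1 hx).1).2
          calc A * f (k - x) * exp (ε * (k - x))
              ≤ A * (K₀ * exp (-c₀ * (k - x))) * exp (ε * (k - x)) := by
                gcongr
                exact hdecay _ hx
            _ = A * K₀ * exp ((ε - c₀) * (k - x)) := by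
                rw [sub_mul, exp_sub, neg_mul, exp_neg]
                field_simp
            _ ≤ A * K₀ * exp (-(c₀ / 2) * (k - x)) := by gcongr; linarith
      _ ≤ exp (-(c₀ / 2) * T) * (A * K₀ * (1 - exp (-(c₀ / 2) / n))⁻¹) := by
          rw [← Finset.mul_sum, mul_left_comm]
          gcongr
          refine sum_exp_neg_le (θ := θ) (half_pos hc₀) hn fun x hx => ?_
          obtain ⟨hxF, hxT⟩ := Finset.mem_filter.1 hx
          exact ⟨(hF x hxF).1, not_le.1 hxT⟩

theorem tsum_ofReal_le_of_sum_le {ι : Type*} {S : Set ι} {f : ι → ℝ} {b : ℝ}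
    (hf : ∀ x ∈ S, 0 ≤ f x) (h : ∀ F : Finset ι, ↑F ⊆ S → ∑ x ∈ F, f x ≤ b) :
    ∑' x : S, ENNReal.ofReal (f x) ≤ ENNReal.ofReal b := by
  rw [ENNReal.tsum_eq_iSup_sum]
  refine iSup_le fun F => ?_
  rw [← ENNReal.ofReal_sum_of_nonneg (f := fun x : S => f x) fun x _ => hf x x.2]
  have hF := h (F.map (Function.Embedding.subtype _)) fun x hx => by
    obtain ⟨y, -, rfl⟩ := Finset.mem_map.1 hx
    exact y.2
  rw [Finset.sum_map] at hF
  exact ENNReal.ofReal_le_ofReal hF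

theorem tsum_tsum_ofReal_le_exp {D₁ D₂ : Set ℝ} {n : ℕ} (hn : 0 < n) {θ : ℝ}
    (hD₁ : D₁ ⊆ {x | ∃ j : ℤ, x = θ + j / n}) {f g : ℝ → ℝ} (hf0 : ∀ x, 0 ≤ f x)
    (hg0 : ∀ x, 0 ≤ g x) {K₀ c₀ : ℝ} (hK₀ : 0 ≤ K₀) (hc₀ : 0 < c₀)
    (hf : ∀ x, 0 < x → f x ≤ K₀ * exp (-c₀ * x)) (hg : ∀ x, 0 < x → g x ≤ K₀ * exp (-c₀ * x))
    {κ : ℝ → ℝ → ℝ} (hκ : ∀ k ∈ D₁, ∀ k' ∈ D₂, k' ≤ k → 0 ≤ κ k k') {ε C s t a : ℝ}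
    (hεc : ε ≤ c₀ / 2) (hC : 0 ≤ C) (ha : 0 ≤ a)
    (hmass : ∀ k ∈ D₁, s < k → ∀ F : Finset ℝ, ↑F ⊆ D₂ ∩ Set.Ioc s k →
      ∑ k' ∈ F, κ k k' * exp (ε * (k - k')) ≤ C) :
    ∑' k : (D₁ ∩ Set.Ioo s t : Set ℝ), ∑' k' : (D₂ ∩ Set.Ioc s (k : ℝ) : Set ℝ),
        ENNReal.ofReal (a * f (t - k) * κ k k' * g (k' - s)) ≤
      ENNReal.ofReal (a * K₀ ^ 2 * C * (1 - exp (-(c₀ / 2) / n))⁻¹ * exp (-ε * (t - s))) := by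
  set pref := a * K₀ ^ 2 * exp (-ε * (t - s))
  have hpref : 0 ≤ pref := by positivity
  have hinner : ∀ k : (D₁ ∩ Set.Ioo s t : Set ℝ),
      ∑' k' : (D₂ ∩ Set.Ioc s (k : ℝ) : Set ℝ), ENNReal.ofReal (a * f (t - k) * κ k k' * g (k' - s))
        ≤ ENNReal.ofReal (pref * C * exp (-(c₀ / 2) * (t - k))) := by
    rintro ⟨k, hkD, hsk, hkt⟩
    refine tsum_ofReal_le_of_sum_le (f := fun k' => a * f (t - k) * κ k k' * g (k' - s))
      (fun k' hk' => ?_) fun F hF => ?_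
    · have := hκ k hkD k' hk'.1 hk'.2.2
      have := hf0 (t - k)
      have := hg0 (k' - s)
      positivity
    have hterm : ∀ k' ∈ F, a * f (t - k) * κ k k' * g (k' - s) ≤
        pref * exp (-(c₀ / 2) * (t - k)) * (κ k k' * exp (ε * (k - k'))) := fun k' hk' => by
      obtain ⟨hk'D, hsk', hk'k⟩ := hF hk'
      have hκ0 := hκ k hkD k' hk'D hk'k
      -- of the decay rate `c₀`, `ε` pays for the gap `t - s` and `c₀ / 2` for the sum over `k`
      have hexp : exp (-c₀ * (t - k)) * exp (-c₀ * (k' - s)) ≤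
          exp (-ε * (t - s)) * exp (-(c₀ / 2) * (t - k)) * exp (ε * (k - k')) := by
        simp only [← exp_add]
        exact exp_le_exp.2 (by nlinarith)
      calc a * f (t - k) * κ k k' * g (k' - s)
          ≤ a * (K₀ * exp (-c₀ * (t - k))) * κ k k' * (K₀ * exp (-c₀ * (k' - s))) := by
            have := hf (t - k) (by linarith)
            have := hg (k' - s) (by linarith)
            have := hg0 (k' - s)
            gcongr
        _ = a * K₀ ^ 2 * κ k k' * (exp (-c₀ * (t - k)) * exp (-c₀ * (k' - s))) := by ring
        _ ≤ a * K₀ ^ 2 * κ k k' *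
            (exp (-ε * (t - s)) * exp (-(c₀ / 2) * (t - k)) * exp (ε * (k - k'))) := by
            gcongr
        _ = _ := by ring
    calc ∑ k' ∈ F, a * f (t - k) * κ k k' * g (k' - s)
        ≤ ∑ k' ∈ F, pref * exp (-(c₀ / 2) * (t - k)) * (κ k k' * exp (ε * (k - k'))) :=
          Finset.sum_le_sum hterm
      _ ≤ pref * exp (-(c₀ / 2) * (t - k)) * C := by
          rw [← Finset.mul_sum]
          gcongr
          exact hmass k hkD hsk F fun x hx => hF hx
      _ = _ := by ring
  calc _ ≤ ∑' k : (D₁ ∩ Set.Ioo s t : Set ℝ),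
          ENNReal.ofReal (pref * C * exp (-(c₀ / 2) * (t - k))) := ENNReal.tsum_le_tsum hinner
    _ ≤ _ := by
        refine tsum_ofReal_le_of_sum_le (f := fun k => pref * C * exp (-(c₀ / 2) * (t - k)))
          (fun _ _ => by positivity) fun F hF => ?_
        have hgeom := sum_exp_neg_le (θ := θ) (T := 0) (k := t) (F := F) (half_pos hc₀) hn
          fun x hx => ⟨hD₁ (hF hx).1, by linarith [(hF hx).2.2]⟩
        rw [mul_zero, exp_zero, one_mul] at hgeom
        rw [← Finset.mul_sum]
        calc pref * C * ∑ i ∈ F, exp (-(c₀ / 2) * (t - i))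
            ≤ pref * C * (1 - exp (-(c₀ / 2) / n))⁻¹ := by gcongr
          _ = _ := by ring

theorem isResolvent_of_window {P : Type*} [Fintype P] [DecidableEq P] {D : P → Set ℝ}
    {a : P → P → ℝ} {h : P → P → ℝ → ℝ} {co : P → ℝ → P → ℝ → ℝ}
    (hco_diag : ∀ p p' k, k ∈ D p → k ∈ D p' → co p k p' k = if p = p' then 1 else 0)
    (hco_rec : ∀ p k p' k', k ∈ D p → k' ∈ D p' → k' < k →
      co p k p' k' = ∑ p'' : P, ∑ᶠ k'' ∈ D p'' ∩ Set.Ico k' k,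
        a p p'' * h p p'' (k - k'') * co p'' k'' p' k')
    {s t : ℝ} {W : P → Finset ℝ} (hW : ∀ q, (W q : Set ℝ) = D q ∩ Set.Ioc s t) :
    IsResolvent W (fun p p'' k k'' => a p p'' * h p p'' (k - k'')) co := by
  have hmem : ∀ q x, x ∈ W q ↔ x ∈ D q ∧ s < x ∧ x ≤ t := fun q x => by
    rw [← Finset.mem_coe, hW]
    rfl
  refine ⟨fun p p' k hk hk' => hco_diag p p' k ((hmem p k).1 hk).1 ((hmem p' k).1 hk').1,
    fun p p' k k' hk hk' hlt => ?_⟩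
  obtain ⟨hkD, -, hkt⟩ := (hmem p k).1 hk
  obtain ⟨hk'D, hsk', -⟩ := (hmem p' k').1 hk'
  rw [hco_rec p k p' k' hkD hk'D hlt]
  refine Finset.sum_congr rfl fun p'' _ => ?_
  rw [← finsum_mem_coe_finset, Finset.coe_filter]
  refine finsum_mem_congr (Set.ext fun x => ?_) fun _ _ => rfl
  simp only [Set.mem_inter_iff, Set.mem_Ico, hmem]
  constructor
  · rintro ⟨hx, hkx, hxk⟩
    exact ⟨⟨hx, hsk'.trans_le hkx, hxk.le.trans hkt⟩, hkx, hxk⟩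
  · rintro ⟨⟨hx, -, -⟩, hkx, hxk⟩
    exact ⟨hx, hkx, hxk⟩

theorem exists_weighted_coeff_sum_le {P : Type*} [Fintype P] [DecidableEq P]
    {n : P → ℕ} (hn : ∀ p, 1 ≤ n p) {θ : P → ℝ} {D : P → Set ℝ}
    (hD : ∀ p, D p = {k : ℝ | ∃ j : ℤ, k = θ p + (j : ℝ) / (n p : ℝ)})
    (hfin : ∀ u v : ℝ, u < v → ((⋃ p, D p) ∩ Set.Ioc u v).Finite)
    {a : P → P → ℝ} (ha : ∀ p p', 0 ≤ a p p') {h : P → P → ℝ → ℝ} (hh : ∀ p p' x, 0 ≤ h p p' x)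
    {co : P → ℝ → P → ℝ → ℝ}
    (hco_nonneg : ∀ p k p' k', k ∈ D p → k' ∈ D p' → k' ≤ k → 0 ≤ co p k p' k')
    (hco_diag : ∀ p p' k, k ∈ D p → k ∈ D p' → co p k p' k = if p = p' then 1 else 0)
    (hco_rec : ∀ p k p' k', k ∈ D p → k' ∈ D p' → k' < k →
      co p k p' k' = ∑ p'' : P, ∑ᶠ k'' ∈ D p'' ∩ Set.Ico k' k,
        a p p'' * h p p'' (k - k'') * co p'' k'' p' k')
    {Hm : Matrix P P ℝ} (hHm0 : ∀ p p', 0 ≤ Hm p p')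
    (hHm : ∀ p p', ENNReal.ofReal (Hm p p') =
      ENNReal.ofReal (a p p') *
        ⨆ x : ℝ, ∑' j : ℤ, ENNReal.ofReal (h p p' (x + (j : ℝ) / (n p' : ℝ))))
    (hspec : spectralRadius ℂ (Hm.map (algebraMap ℝ ℂ)) < 1)
    {K₀ c₀ : ℝ} (hK₀ : 0 ≤ K₀) (hc₀ : 0 < c₀)
    (hdecayPP : ∀ (p p' : P) (x : ℝ), 0 < x → h p p' x ≤ K₀ * exp (-c₀ * x)) :
    ∃ ε, 0 < ε ∧ ε ≤ c₀ / 2 ∧ ∃ C, 0 ≤ C ∧ ∀ p p' s k, k ∈ D p → s < k →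
      ∀ F : Finset ℝ, ↑F ⊆ D p' ∩ Set.Ioc s k →
        ∑ k' ∈ F, co p k p' k' * exp (ε * (k - k')) ≤ C := by
  set E : Matrix P P ℝ := Matrix.of fun p p'' => a p p'' * K₀ * (1 - exp (-(c₀ / 2) / n p''))⁻¹
  obtain ⟨T, ε, hε, hεc, w, hw0, hw⟩ :=
    exists_perturbed_supersolution hHm0 hspec E (half_pos hc₀)
  refine ⟨ε, hε, hεc, ∑ p, w p, Finset.sum_nonneg fun p _ => hw0 p,
    fun p p' s k hk hsk F hF => ?_⟩
  obtain ⟨W, hW⟩ : ∃ W : P → Finset ℝ, ∀ q, (W q : Set ℝ) = D q ∩ Set.Ioc s k :=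
    ⟨fun q => ((hfin s k hsk).subset (Set.inter_subset_inter_left _
      (Set.subset_iUnion D q))).toFinset, fun q => by simp⟩
  have hmem : ∀ q x, x ∈ W q ↔ x ∈ D q ∧ s < x ∧ x ≤ k := fun q x => by
    rw [← Finset.mem_coe, hW]
    rfl
  have hrow : ∀ p p'' k₁, k₁ ∈ W p →
      ∑ k'' ∈ W p'' with k'' < k₁, a p p'' * h p p'' (k₁ - k'') * exp (ε * (k₁ - k'')) ≤
        (exp (ε * T) • Hm + exp (-(c₀ / 2) * T) • E) p p'' := fun p p'' k₁ _ => by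
    simp only [Matrix.add_apply, Matrix.smul_apply, smul_eq_mul, E, Matrix.of_apply]
    refine sum_mul_exp_le (θ := θ p'') (hh p p'') (hn p'') (ha p p'') (hHm0 p p'') (hHm p p'')
      hK₀ hc₀ (hdecayPP p p'') hε.le hεc T fun x hx => ?_
    obtain ⟨hxW, hxk⟩ := Finset.mem_filter.1 hx
    exact ⟨(hD p'').subset ((hmem p'' x).1 hxW).1, hxk⟩
  have hmass := ((isResolvent_of_window hco_diag hco_rec hW).tilt ε).totalMass_le
    (fun p p'' k k'' => by have := ha p p''; have := hh p p'' (k - k''); positivity)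
    hrow hw0 hw ((hmem p k).2 ⟨hk, hsk, le_rfl⟩)
  have hsub : F ⊆ {k' ∈ W p' | k' ≤ k} := fun x hx =>
    Finset.mem_filter.2 ⟨(hmem p' x).2 ⟨(hF hx).1, (hF hx).2⟩, (hF hx).2.2⟩
  calc ∑ k' ∈ F, co p k p' k' * exp (ε * (k - k'))
      ≤ totalMass W (fun p k p' k' => co p k p' k' * exp (ε * (k - k'))) p k :=
        sum_le_totalMass (c := fun p k p' k' => co p k p' k' * exp (ε * (k - k'))) hsub
          fun q k' hk' hk'k =>
            mul_nonneg (hco_nonneg p k q k' hk ((hmem q k').1 hk').1 hk'k) (exp_pos _).le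
    _ ≤ w p := hmass
    _ ≤ ∑ q, w q := Finset.single_le_sum (fun q _ => hw0 q) (Finset.mem_univ p)

theorem stmt_11_general
    {P : Type*} [Fintype P] [DecidableEq P]
    (n : P → ℕ) (hn : ∀ p, 1 ≤ n p)
    (θ : P → ℝ)
    (D : P → Set ℝ)
    (hD : ∀ p, D p = {k : ℝ | ∃ j : ℤ, k = θ p + (j : ℝ) / (n p : ℝ)})
    (hfin : ∀ u v : ℝ, u < v → ((⋃ p, D p) ∩ Set.Ioc u v).Finite)
    (a : P → P → ℝ) (ha : ∀ p p', 0 ≤ a p p')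
    (h : P → P → ℝ → ℝ) (hh : ∀ p p' x, 0 ≤ h p p' x)
    -- the coefficients `c(p,k;p',k')`, characterized by the well-founded recursion
    (co : P → ℝ → P → ℝ → ℝ)
    (hco_nonneg : ∀ p k p' k', k ∈ D p → k' ∈ D p' → k' ≤ k → 0 ≤ co p k p' k')
    (hco_diag : ∀ p p' k, k ∈ D p → k ∈ D p' → co p k p' k = if p = p' then 1 else 0)
    (hco_rec : ∀ p k p' k', k ∈ D p → k' ∈ D p' → k' < k →
      co p k p' k' = ∑ p'' : P, ∑ᶠ k'' ∈ D p'' ∩ Set.Ico k' k,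
        a p p'' * h p p'' (k - k'') * co p'' k'' p' k')
    -- the matrix `H` of the interaction norms: its entries are finite reals
    (Hm : Matrix P P ℝ) (hHm0 : ∀ p p', 0 ≤ Hm p p')
    (hHm : ∀ p p', ENNReal.ofReal (Hm p p') =
      ENNReal.ofReal (a p p') *
        ⨆ x : ℝ, ∑' j : ℤ, ENNReal.ofReal (h p p' (x + (j : ℝ) / (n p' : ℝ))))
    -- the spectral radius of `H` is strictly less than 1
    (hspec : spectralRadius ℂ (Hm.map (algebraMap ℝ ℂ)) < 1)
    -- the set `M` of nodes and the interaction functions involving nodes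
    {M : Type*} [Fintype M]
    (hMM : M → M → ℝ → ℝ)
    (hMP : M → P → ℝ → ℝ) (hhMP : ∀ m p x, 0 ≤ hMP m p x)
    (hPM : P → M → ℝ → ℝ) (hhPM : ∀ p m x, 0 ≤ hPM p m x)
    (aMP : M → P → ℝ) (haMP : ∀ m p, 0 ≤ aMP m p)
    -- the cluster functions `𝔥^m_{m'}(s,t)`
    (H𝔥 : M → M → ℝ → ℝ → ℝ≥0∞)
    (hH𝔥 : ∀ (m m' : M) (s t : ℝ), s < t →
      H𝔥 m m' s t = ENNReal.ofReal (hMM m m' (t - s)) +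
        ∑ p : P, ∑ p' : P,
          ∑' k : (D p ∩ Set.Ioo s t : Set ℝ),
            ∑' k' : (D p' ∩ Set.Ioc s (k : ℝ) : Set ℝ),
              ENNReal.ofReal (aMP m p * hMP m p (t - (k : ℝ)) *
                co p (k : ℝ) p' (k' : ℝ) * hPM p' m' ((k' : ℝ) - s)))
    -- exponential tails of all the interaction functions
    (K₀ c₀ : ℝ) (hK₀ : 0 < K₀) (hc₀ : 0 < c₀)
    (hdecayPP : ∀ (p p' : P) (x : ℝ), 0 < x → h p p' x ≤ K₀ * Real.exp (-c₀ * x))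
    (hdecayMM : ∀ (m m' : M) (x : ℝ), 0 < x → hMM m m' x ≤ K₀ * Real.exp (-c₀ * x))
    (hdecayMP : ∀ (m : M) (p : P) (x : ℝ), 0 < x → hMP m p x ≤ K₀ * Real.exp (-c₀ * x))
    (hdecayPM : ∀ (p : P) (m : M) (x : ℝ), 0 < x → hPM p m x ≤ K₀ * Real.exp (-c₀ * x)) :
    ∃ K c : ℝ, 0 < K ∧ 0 < c ∧
      ∀ (m m' : M) (s t : ℝ), s < t →
        H𝔥 m m' s t ≤ ENNReal.ofReal (K * Real.exp (-c * (t - s))) := by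
  obtain ⟨ε, hε, hεc, C, hC, hmass⟩ := exists_weighted_coeff_sum_le hn hD hfin ha hh hco_nonneg
    hco_diag hco_rec hHm0 hHm hspec hK₀.le hc₀ hdecayPP
  set G : P → ℝ := fun p => (1 - exp (-(c₀ / 2) / n p))⁻¹
  have hG : ∀ p, 0 ≤ G p := fun p => inv_nonneg.2 (sub_nonneg.2 (exp_le_one_iff.2
    (div_nonpos_of_nonpos_of_nonneg (by linarith) (Nat.cast_nonneg _))))
  set L : M → ℝ := fun m => ∑ p : P, ∑ _p' : P, aMP m p * K₀ ^ 2 * C * G p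
  have hL : ∀ m, 0 ≤ L m := fun m => Finset.sum_nonneg fun p _ => Finset.sum_nonneg fun _ _ => by
    have := haMP m p; have := hG p; positivity
  refine ⟨K₀ + ∑ m, L m, ε, add_pos_of_pos_of_nonneg hK₀ (Finset.sum_nonneg fun m _ => hL m), hε,
    fun m m' s t hst => ?_⟩
  rw [hH𝔥 m m' s t hst]
  calc _ ≤ ENNReal.ofReal (K₀ * exp (-ε * (t - s))) + ∑ p : P, ∑ p' : P,
        ENNReal.ofReal (aMP m p * K₀ ^ 2 * C * G p * exp (-ε * (t - s))) := by
        gcongr with p _ p' _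
        · refine (hdecayMM m m' _ (sub_pos.2 hst)).trans ?_
          gcongr
          nlinarith
        · exact tsum_tsum_ofReal_le_exp (hn p) (hD p).subset (hhMP m p) (hhPM p' m') hK₀.le hc₀
            (hdecayMP m p) (hdecayPM p' m') (fun k hk k' => hco_nonneg p k p' k' hk) hεc hC
            (haMP m p) (hmass p p' s)
    _ = ENNReal.ofReal ((K₀ + L m) * exp (-ε * (t - s))) := by
        have hX : ∀ p, 0 ≤ aMP m p * K₀ ^ 2 * C * G p * exp (-ε * (t - s)) := fun p => by
          have := haMP m p; have := hG p; positivity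
        rw [add_mul, ENNReal.ofReal_add (by positivity) (by have := hL m; positivity)]
        simp only [L, Finset.sum_mul]
        rw [ENNReal.ofReal_sum_of_nonneg fun p _ => Finset.sum_nonneg fun _ _ => hX p]
        simp only [ENNReal.ofReal_sum_of_nonneg fun _ _ => hX _]
    _ ≤ _ := by
        gcongr
        exact Finset.single_le_sum (fun m _ => hL m) (Finset.mem_univ m)

/-- **Proposition 6.1, second part.** Exponential decay of the cluster functions. -/
theorem stmt_11
    {P : Type*} [Fintype P] [Nonempty P] [DecidableEq P]
    (n : P → ℕ) (hn : ∀ p, 1 ≤ n p)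
    (θ : P → ℝ) (hθ0 : ∀ p, 0 ≤ θ p) (hθ1 : ∀ p, θ p < 1 / (n p : ℝ))
    (D : P → Set ℝ)
    (hD : ∀ p, D p = {k : ℝ | ∃ j : ℤ, k = θ p + (j : ℝ) / (n p : ℝ)})
    (hfin : ∀ u v : ℝ, u < v → ((⋃ p, D p) ∩ Set.Ioc u v).Finite)
    (a : P → P → ℝ) (ha : ∀ p p', 0 ≤ a p p')
    (h : P → P → ℝ → ℝ) (hh : ∀ p p' x, 0 ≤ h p p' x)
    (hh0 : ∀ p p' x, x ≤ 0 → h p p' x = 0)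
    -- the coefficients `c(p,k;p',k')`, characterized by the well-founded recursion
    (co : P → ℝ → P → ℝ → ℝ)
    (hco_nonneg : ∀ p k p' k', k ∈ D p → k' ∈ D p' → k' ≤ k → 0 ≤ co p k p' k')
    (hco_diag : ∀ p p' k, k ∈ D p → k ∈ D p' → co p k p' k = if p = p' then 1 else 0)
    (hco_rec : ∀ p k p' k', k ∈ D p → k' ∈ D p' → k' < k →
      co p k p' k' = ∑ p'' : P, ∑ᶠ k'' ∈ D p'' ∩ Set.Ico k' k,
        a p p'' * h p p'' (k - k'') * co p'' k'' p' k')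
    -- the matrix `H` of the interaction norms: its entries are finite reals
    (Hm : Matrix P P ℝ) (hHm0 : ∀ p p', 0 ≤ Hm p p')
    (hHm : ∀ p p', ENNReal.ofReal (Hm p p') =
      ENNReal.ofReal (a p p') *
        ⨆ x : ℝ, ∑' j : ℤ, ENNReal.ofReal (h p p' (x + (j : ℝ) / (n p' : ℝ))))
    -- the spectral radius of `H` is strictly less than 1
    (hspec : spectralRadius ℂ (Hm.map (algebraMap ℝ ℂ)) < 1)
    -- the set `M` of nodes and the interaction functions involving nodes
    {M : Type*} [Fintype M] [Nonempty M]
    (hMM : M → M → ℝ → ℝ) (hhMM : ∀ m m' x, 0 ≤ hMM m m' x)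
    (hhMM0 : ∀ m m' x, x ≤ 0 → hMM m m' x = 0)
    (hMP : M → P → ℝ → ℝ) (hhMP : ∀ m p x, 0 ≤ hMP m p x)
    (hhMP0 : ∀ m p x, x ≤ 0 → hMP m p x = 0)
    (hPM : P → M → ℝ → ℝ) (hhPM : ∀ p m x, 0 ≤ hPM p m x)
    (hhPM0 : ∀ p m x, x ≤ 0 → hPM p m x = 0)
    (aMP : M → P → ℝ) (haMP : ∀ m p, 0 ≤ aMP m p)
    -- the cluster functions `𝔥^m_{m'}(s,t)`
    (H𝔥 : M → M → ℝ → ℝ → ℝ≥0∞)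
    (hH𝔥 : ∀ (m m' : M) (s t : ℝ), s < t →
      H𝔥 m m' s t = ENNReal.ofReal (hMM m m' (t - s)) +
        ∑ p : P, ∑ p' : P,
          ∑' k : (D p ∩ Set.Ioo s t : Set ℝ),
            ∑' k' : (D p' ∩ Set.Ioc s (k : ℝ) : Set ℝ),
              ENNReal.ofReal (aMP m p * hMP m p (t - (k : ℝ)) *
                co p (k : ℝ) p' (k' : ℝ) * hPM p' m' ((k' : ℝ) - s)))
    -- exponential tails of all the interaction functions
    (K₀ c₀ : ℝ) (hK₀ : 0 < K₀) (hc₀ : 0 < c₀)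
    (hdecayPP : ∀ (p p' : P) (x : ℝ), 0 < x → h p p' x ≤ K₀ * Real.exp (-c₀ * x))
    (hdecayMM : ∀ (m m' : M) (x : ℝ), 0 < x → hMM m m' x ≤ K₀ * Real.exp (-c₀ * x))
    (hdecayMP : ∀ (m : M) (p : P) (x : ℝ), 0 < x → hMP m p x ≤ K₀ * Real.exp (-c₀ * x))
    (hdecayPM : ∀ (p : P) (m : M) (x : ℝ), 0 < x → hPM p m x ≤ K₀ * Real.exp (-c₀ * x)) :
    ∃ K c : ℝ, 0 < K ∧ 0 < c ∧
      ∀ (m m' : M) (s t : ℝ), s < t →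
        H𝔥 m m' s t ≤ ENNReal.ofReal (K * Real.exp (-c * (t - s))) :=
  stmt_11_general n hn θ D hD hfin a ha h hh co hco_nonneg hco_diag hco_rec Hm hHm0 hHm hspec hMM
    hMP hhMP hPM hhPM aMP haMP H𝔥 hH𝔥 K₀ c₀ hK₀ hc₀ hdecayPP hdecayMM hdecayMP hdecayPM
end

section
/- Spectral radius of the Schur-type reduction of a nonnegative block matrix (from the proof of Proposition 5.6): Let d₁, d₂ ≥ 1 and let N be a real (d₁+d₂)×(d₁+d₂) matrix with nonnegative entries, written in block form N = [[A, B],[C, D]] with A of size d₁×d₁ and D of size d₂×d₂. If the spectral radius of N is strictly less than 1, then the spectral radius of D is strictly less than 1, I−D is invertible, every entry of (I−D)^{-1} = Σ_{n≥0} Dⁿ is nonnegative, and the spectral radius of A + B (I−D)^{-1} C is at most the spectral radius of N. -/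
/-!
For `ρ(N) < t < 1` the Neumann series `u = ∑ₖ (N / t)ᵏ 1` is a positive vector with `N u ≤ t u`.
Splitting `u = (x, y)` along the blocks gives `D y ≤ t y` and `C x ≤ (1 - D) y`. By the
Collatz–Wielandt bound `ρ(D) ≤ t < 1`, so `(1 - D)⁻¹ = ∑ₖ Dᵏ` is entrywise nonnegative and
`(1 - D)⁻¹ C x ≤ y`; hence `(A + B (1 - D)⁻¹ C) x ≤ A x + B y ≤ t x`, and the Schur-type reduction
has spectral radius at most `t` as well. Let `t` decrease to `ρ(N)`.
-/

open Matrix Filter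

theorem summable_norm_pow_div_of_spectralRadius_lt {A : Type*} [NormedRing A] [NormedAlgebra ℂ A]
    [CompleteSpace A] {a : A} {t : ℝ} (h : spectralRadius ℂ a < ENNReal.ofReal t) :
    Summable fun n : ℕ => ‖a ^ n‖ / t ^ n := by
  obtain ⟨r, hr, hρr, hrt⟩ := ENNReal.lt_iff_exists_real_btwn.1 h
  have ht : 0 < t := ENNReal.ofReal_pos.1 (hρr.trans hrt |>.trans_le' bot_le)
  have hrt' : r < t := (ENNReal.ofReal_lt_ofReal_iff ht).1 hrt
  have hbound : ∀ᶠ n : ℕ in atTop, ‖a ^ n‖ / t ^ n ≤ (r / t) ^ n := by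
    filter_upwards [(spectrum.pow_norm_pow_one_div_tendsto_nhds_spectralRadius a)
      |>.eventually_lt_const hρr, eventually_gt_atTop 0] with n hn hn0
    rw [ENNReal.ofReal_lt_ofReal_iff_of_nonneg (by positivity), one_div,
      Real.rpow_inv_lt_iff_of_pos (norm_nonneg _) hr (by positivity), Real.rpow_natCast] at hn
    rw [div_pow]
    gcongr
  refine (summable_geometric_of_lt_one (by positivity) ((div_lt_one ht).2 hrt')
    |>.of_norm_bounded_eventually_nat ?_)
  filter_upwards [hbound] with n hn
  rwa [Real.norm_of_nonneg (by positivity)]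

theorem Summable.isUnit_one_sub {R : Type*} [Ring R] [TopologicalSpace R] [IsTopologicalRing R]
    [T2Space R] {x : R} (h : Summable (x ^ ·)) : IsUnit (1 - x) :=
  ⟨⟨1 - x, ∑' k, x ^ k, h.one_sub_mul_tsum_pow, h.tsum_pow_mul_one_sub⟩, rfl⟩

namespace Matrix

section Nonneg

variable {l m n R : Type*} [Fintype m] [Semiring R] [PartialOrder R] [IsOrderedRing R]

theorem mulVec_nonneg {M : Matrix l m R} (hM : ∀ i j, 0 ≤ M i j) {v : m → R} (hv : 0 ≤ v) :
    0 ≤ M *ᵥ v :=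
  fun i => Finset.sum_nonneg fun j _ => mul_nonneg (hM i j) (hv j)

theorem mul_apply_nonneg {M : Matrix l m R} {N : Matrix m n R} (hM : ∀ i j, 0 ≤ M i j)
    (hN : ∀ i j, 0 ≤ N i j) (i : l) (j : n) : 0 ≤ (M * N) i j :=
  Finset.sum_nonneg fun k _ => mul_nonneg (hM i k) (hN k j)

end Nonneg

theorem mulVec_mono {l m R : Type*} [Fintype m] [Ring R] [PartialOrder R] [IsOrderedRing R]
    {M : Matrix l m R} (hM : ∀ i j, 0 ≤ M i j) {v w : m → R} (h : v ≤ w) :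
    M *ᵥ v ≤ M *ᵥ w := by
  simpa [mulVec_sub] using mulVec_nonneg hM (sub_nonneg.2 h)

variable {n : Type*} [Fintype n]

theorem le_of_smul_le_mulVec_of_mulVec_le_smul {M : Matrix n n ℝ} (hM : ∀ i j, 0 ≤ M i j)
    {w x : n → ℝ} {s t : ℝ} (hw : 0 ≤ w) (hw0 : w ≠ 0) (hx : ∀ i, 0 < x i)
    (hsw : s • w ≤ M *ᵥ w) (hxt : M *ᵥ x ≤ t • x) : s ≤ t := by
  obtain ⟨j₀, hj₀⟩ := Function.ne_iff.1 hw0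
  obtain ⟨i, -, hi⟩ := Finset.exists_max_image Finset.univ (fun i => w i / x i)
    ⟨j₀, Finset.mem_univ j₀⟩
  set c := w i / x i
  have hwc : w ≤ c • x := fun j => (div_le_iff₀ (hx j)).1 (hi j (Finset.mem_univ j))
  have hc : 0 < c :=
    (div_pos ((hw j₀).lt_of_ne' hj₀) (hx j₀)).trans_le (hi j₀ (Finset.mem_univ j₀))
  have hwi : w i = c * x i := (div_mul_cancel₀ _ (hx i).ne').symm
  have key : s * w i ≤ t * w i :=
    calc s * w i ≤ (M *ᵥ w) i := hsw i
      _ ≤ (M *ᵥ (c • x)) i := mulVec_mono hM hwc i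
      _ = c * (M *ᵥ x) i := by rw [mulVec_smul]; rfl
      _ ≤ c * (t * x i) := mul_le_mul_of_nonneg_left (hxt i) hc.le
      _ = t * w i := by rw [hwi]; ring
  exact le_of_mul_le_mul_right key (hwi ▸ mul_pos hc (hx i))

theorem norm_smul_le_mulVec_norm {M : Matrix n n ℝ} (hM : ∀ i j, 0 ≤ M i j)
    {v : n → ℂ} {μ : ℂ}
    (hv : M.map (algebraMap ℝ ℂ) *ᵥ v = μ • v) :
    ‖μ‖ • (fun i => ‖v i‖) ≤ M *ᵥ fun i => ‖v i‖ := fun i =>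
  calc ‖μ‖ * ‖v i‖ = ‖∑ j, (M i j : ℂ) * v j‖ := by
        rw [← norm_mul, ← smul_eq_mul, ← Pi.smul_apply, ← hv]; rfl
    _ ≤ ∑ j, ‖(M i j : ℂ) * v j‖ := norm_sum_le _ _
    _ = (M *ᵥ fun i => ‖v i‖) i := by
        simp [mulVec, dotProduct, Complex.norm_real, abs_of_nonneg (hM i _)]

variable [DecidableEq n]

/-- The Collatz–Wielandt bound. -/
theorem spectralRadius_map_le_of_mulVec_le {M : Matrix n n ℝ} (hM : ∀ i j, 0 ≤ M i j)
    {x : n → ℝ} (hx : ∀ i, 0 < x i) {t : ℝ} (hxt : M *ᵥ x ≤ t • x) :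
    spectralRadius ℂ (M.map (algebraMap ℝ ℂ)) ≤ ENNReal.ofReal t := by
  refine iSup₂_le fun μ hμ => ?_
  rw [← spectrum_toLin', ← Module.End.hasEigenvalue_iff_mem_spectrum] at hμ
  obtain ⟨v, hv⟩ := hμ.exists_hasEigenvector
  have hw0 : (fun i => ‖v i‖) ≠ 0 := fun h =>
    hv.2 (funext fun i => norm_eq_zero.1 (congrFun h i))
  have := le_of_smul_le_mulVec_of_mulVec_le_smul hM (fun i => norm_nonneg (v i)) hw0 hx
    (norm_smul_le_mulVec_norm hM hv.apply_eq_smul) hxt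
  rw [← ENNReal.ofReal_coe_nnreal, coe_nnnorm]
  exact ENNReal.ofReal_le_ofReal this

theorem summable_pow_inv_smul_of_spectralRadius_lt (M : Matrix n n ℝ) {t : ℝ}
    (h : spectralRadius ℂ (M.map (algebraMap ℝ ℂ)) < ENNReal.ofReal t) :
    Summable fun k : ℕ => (t⁻¹ • M) ^ k := by
  -- Gelfand's formula needs a complex Banach algebra: sum the complexified series, take real parts.
  let : NormedRing (Matrix n n ℂ) := Matrix.linftyOpNormedRing
  let : NormedAlgebra ℂ (Matrix n n ℂ) := Matrix.linftyOpNormedAlgebra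
  have : CompleteSpace (Matrix n n ℂ) := FiniteDimensional.complete ℂ _
  have ht : 0 < t := ENNReal.ofReal_pos.1 (h.trans_le' bot_le)
  have hc : Summable fun k : ℕ => ((t⁻¹ : ℂ) • M.map (algebraMap ℝ ℂ)) ^ k := by
    refine Summable.of_norm ?_
    simpa [smul_pow, norm_smul, div_eq_inv_mul, abs_of_pos ht]
      using summable_norm_pow_div_of_spectralRadius_lt h
  convert hc.map Complex.reAddGroupHom.mapMatrix (continuous_id.matrix_map Complex.continuous_re)
    using 1
  ext k i j
  have hpow : (M.map Complex.ofReal) ^ k = (M ^ k).map Complex.ofReal :=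
    (Matrix.map_pow M Complex.ofRealHom k).symm
  simp only [Function.comp_apply, smul_pow, AddMonoidHom.mapMatrix_apply, map_apply, smul_apply]
  erw [hpow]
  simp [← Complex.ofReal_inv, ← Complex.ofReal_pow]

theorem summable_pow_of_spectralRadius_lt_one_s12 (M : Matrix n n ℝ)
    (h : spectralRadius ℂ (M.map (algebraMap ℝ ℂ)) < 1) : Summable (M ^ ·) := by
  simpa using summable_pow_inv_smul_of_spectralRadius_lt M (t := 1) (by simpa using h)

theorem inv_one_sub_apply_eq_tsum {R : Type*} [CommRing R] [TopologicalSpace R]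
    [IsTopologicalRing R] [T2Space R] {M : Matrix n n R} (h : Summable (M ^ ·)) (i j : n) :
    (1 - M)⁻¹ i j = ∑' k : ℕ, (M ^ k) i j := by
  rw [inv_eq_right_inv h.one_sub_mul_tsum_pow]
  exact (Pi.hasSum.1 (Pi.hasSum.1 h.hasSum i) j).tsum_eq.symm

theorem inv_one_sub_apply_nonneg {M : Matrix n n ℝ} (hM : ∀ i j, 0 ≤ M i j)
    (h : Summable (M ^ ·)) (i j : n) : 0 ≤ (1 - M)⁻¹ i j := by
  rw [inv_one_sub_apply_eq_tsum h]
  exact tsum_nonneg fun k => pow_apply_nonneg hM k i j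

theorem exists_pos_mulVec_le_smul_of_spectralRadius_lt {N : Matrix n n ℝ}
    (hN : ∀ i j, 0 ≤ N i j) {t : ℝ}
    (h : spectralRadius ℂ (N.map (algebraMap ℝ ℂ)) < ENNReal.ofReal t) :
    ∃ u : n → ℝ, (∀ i, 0 < u i) ∧ N *ᵥ u ≤ t • u := by
  have ht : 0 < t := ENNReal.ofReal_pos.1 (h.trans_le' bot_le)
  set M := t⁻¹ • N
  have hM : ∀ i j, 0 ≤ M i j := fun i j => smul_nonneg (inv_nonneg.2 ht.le) (hN i j)
  have hs : Summable (M ^ ·) := summable_pow_inv_smul_of_spectralRadius_lt N h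
  -- `u = ∑ₖ (N / t)ᵏ 1`
  set u := (1 - M)⁻¹ *ᵥ 1
  have hu : u = 1 + M *ᵥ u := by
    have : (1 - M) *ᵥ u = 1 := by
      rw [mulVec_mulVec, mul_nonsing_inv _ ((isUnit_iff_isUnit_det _).1 hs.isUnit_one_sub),
        one_mulVec]
    rwa [sub_mulVec, one_mulVec, sub_eq_iff_eq_add] at this
  have hMu : 0 ≤ M *ᵥ u :=
    mulVec_nonneg hM (mulVec_nonneg (inv_one_sub_apply_nonneg hM hs) zero_le_one)
  refine ⟨u, fun i => ?_, ?_⟩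
  · rw [hu]
    exact lt_add_of_pos_of_le one_pos (hMu i)
  · calc N *ᵥ u = t • (M *ᵥ u) := by rw [← smul_mulVec, smul_inv_smul₀ ht.ne']
      _ ≤ t • u := by
        nth_rw 2 [hu]
        exact smul_le_smul_of_nonneg_left (le_add_of_nonneg_left zero_le_one) ht.le

theorem schur_complement_mulVec_le {m n : Type*} [Fintype m] [Fintype n] [DecidableEq n]
    {A : Matrix m m ℝ} {B : Matrix m n ℝ} {C : Matrix n m ℝ} {D : Matrix n n ℝ}
    (hB : ∀ i j, 0 ≤ B i j) (hD : IsUnit (1 - D)) (hP : ∀ i j, 0 ≤ (1 - D)⁻¹ i j)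
    {x : m → ℝ} {y : n → ℝ} {t : ℝ} (ht : t ≤ 1) (hy : 0 ≤ y)
    (hAB : A *ᵥ x + B *ᵥ y ≤ t • x) (hCD : C *ᵥ x + D *ᵥ y ≤ t • y) :
    (A + B * (1 - D)⁻¹ * C) *ᵥ x ≤ t • x := by
  have hCx : C *ᵥ x ≤ (1 - D) *ᵥ y := fun i => by
    have := hCD i
    simp only [Pi.add_apply, Pi.smul_apply, smul_eq_mul, sub_mulVec, one_mulVec,
      Pi.sub_apply] at this ⊢
    linarith [mul_le_of_le_one_left (hy i) ht]
  have hPCx : (1 - D)⁻¹ *ᵥ (C *ᵥ x) ≤ y :=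
    calc (1 - D)⁻¹ *ᵥ (C *ᵥ x) ≤ (1 - D)⁻¹ *ᵥ ((1 - D) *ᵥ y) := mulVec_mono hP hCx
      _ = y := by
        rw [mulVec_mulVec, nonsing_inv_mul _ ((isUnit_iff_isUnit_det _).1 hD), one_mulVec]
  calc (A + B * (1 - D)⁻¹ * C) *ᵥ x = A *ᵥ x + B *ᵥ ((1 - D)⁻¹ *ᵥ (C *ᵥ x)) := by
        rw [add_mulVec, mulVec_mulVec, mulVec_mulVec]
    _ ≤ A *ᵥ x + B *ᵥ y := add_le_add_right (mulVec_mono hB hPCx) _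
    _ ≤ t • x := hAB

theorem spectralRadius_le_of_fromBlocks_lt {m n : Type*} [Fintype m] [DecidableEq m]
    [Fintype n] [DecidableEq n]
    {A : Matrix m m ℝ} {B : Matrix m n ℝ} {C : Matrix n m ℝ} {D : Matrix n n ℝ}
    (hA : ∀ i j, 0 ≤ A i j) (hB : ∀ i j, 0 ≤ B i j) (hC : ∀ i j, 0 ≤ C i j)
    (hD : ∀ i j, 0 ≤ D i j) {t : ℝ} (ht : t < 1)
    (hN : spectralRadius ℂ ((fromBlocks A B C D).map (algebraMap ℝ ℂ)) < ENNReal.ofReal t) :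
    spectralRadius ℂ (D.map (algebraMap ℝ ℂ)) ≤ ENNReal.ofReal t ∧
      spectralRadius ℂ ((A + B * (1 - D)⁻¹ * C).map (algebraMap ℝ ℂ)) ≤
        ENNReal.ofReal t := by
  have hN0 : ∀ i j, 0 ≤ fromBlocks A B C D i j := by
    rintro (i | i) (j | j)
    exacts [hA i j, hB i j, hC i j, hD i j]
  obtain ⟨u, hu, hNu⟩ := exists_pos_mulVec_le_smul_of_spectralRadius_lt hN0 hN
  rw [fromBlocks_mulVec] at hNu
  set x := u ∘ Sum.inl
  set y := u ∘ Sum.inr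
  have hAB : A *ᵥ x + B *ᵥ y ≤ t • x := fun i => hNu (.inl i)
  have hCD : C *ᵥ x + D *ᵥ y ≤ t • y := fun j => hNu (.inr j)
  have hDy : D *ᵥ y ≤ t • y :=
    (le_add_of_nonneg_left (mulVec_nonneg hC fun i => (hu _).le)).trans hCD
  have hρD := spectralRadius_map_le_of_mulVec_le hD (fun j => hu _) hDy
  have hDs := summable_pow_of_spectralRadius_lt_one_s12 D (hρD.trans_lt (ENNReal.ofReal_lt_one.2 ht))
  have hP := inv_one_sub_apply_nonneg hD hDs
  refine ⟨hρD, spectralRadius_map_le_of_mulVec_le ?_ (fun i => hu _)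
    (schur_complement_mulVec_le hB hDs.isUnit_one_sub hP ht.le (fun j => (hu _).le) hAB hCD)⟩
  exact fun i j => add_nonneg (hA i j) (mul_apply_nonneg (mul_apply_nonneg hB hP) hC i j)

end Matrix

theorem stmt_12_general
    {d₁ d₂ : ℕ}
    (A : Matrix (Fin d₁) (Fin d₁) ℝ) (B : Matrix (Fin d₁) (Fin d₂) ℝ)
    (C : Matrix (Fin d₂) (Fin d₁) ℝ) (Dm : Matrix (Fin d₂) (Fin d₂) ℝ)
    (hA : ∀ i j, 0 ≤ A i j) (hB : ∀ i j, 0 ≤ B i j)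
    (hC : ∀ i j, 0 ≤ C i j) (hD : ∀ i j, 0 ≤ Dm i j)
    (hN : spectralRadius ℂ ((Matrix.fromBlocks A B C Dm).map (algebraMap ℝ ℂ)) < 1) :
    spectralRadius ℂ (Dm.map (algebraMap ℝ ℂ)) < 1 ∧
      IsUnit (1 - Dm) ∧
      (∀ i j, (1 - Dm)⁻¹ i j = ∑' k : ℕ, (Dm ^ k) i j) ∧
      (∀ i j, 0 ≤ (1 - Dm)⁻¹ i j) ∧
      spectralRadius ℂ ((A + B * (1 - Dm)⁻¹ * C).map (algebraMap ℝ ℂ)) ≤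
        spectralRadius ℂ ((Matrix.fromBlocks A B C Dm).map (algebraMap ℝ ℂ)) := by
  have hbound {t : ℝ} (hρt : _ < ENNReal.ofReal t) (ht : ENNReal.ofReal t < 1) :=
    spectralRadius_le_of_fromBlocks_lt hA hB hC hD (ENNReal.ofReal_lt_one.1 ht) hρt
  obtain ⟨t₀, -, hρt₀, ht₀⟩ := ENNReal.lt_iff_exists_real_btwn.1 hN
  have hρD : spectralRadius ℂ (Dm.map (algebraMap ℝ ℂ)) < 1 :=
    (hbound hρt₀ ht₀).1.trans_lt ht₀
  have hDs := summable_pow_of_spectralRadius_lt_one_s12 Dm hρD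
  refine ⟨hρD, hDs.isUnit_one_sub, inv_one_sub_apply_eq_tsum hDs,
    inv_one_sub_apply_nonneg hD hDs, le_of_forall_gt_imp_ge_of_dense fun c hc => ?_⟩
  obtain ⟨t, -, hρt, htc⟩ := ENNReal.lt_iff_exists_real_btwn.1 (lt_min hc hN)
  exact (hbound hρt (htc.trans_le (min_le_right _ _))).2.trans (htc.le.trans (min_le_left _ _))

/-- **From the proof of Proposition 5.6.**
Spectral radius of the Schur-type reduction of a nonnegative block matrix. -/
theorem stmt_12
    {d₁ d₂ : ℕ} (hd₁ : 1 ≤ d₁) (hd₂ : 1 ≤ d₂)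
    (A : Matrix (Fin d₁) (Fin d₁) ℝ) (B : Matrix (Fin d₁) (Fin d₂) ℝ)
    (C : Matrix (Fin d₂) (Fin d₁) ℝ) (Dm : Matrix (Fin d₂) (Fin d₂) ℝ)
    (hA : ∀ i j, 0 ≤ A i j) (hB : ∀ i j, 0 ≤ B i j)
    (hC : ∀ i j, 0 ≤ C i j) (hD : ∀ i j, 0 ≤ Dm i j)
    (hN : spectralRadius ℂ ((Matrix.fromBlocks A B C Dm).map (algebraMap ℝ ℂ)) < 1) :
    spectralRadius ℂ (Dm.map (algebraMap ℝ ℂ)) < 1 ∧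
      IsUnit (1 - Dm) ∧
      (∀ i j, (1 - Dm)⁻¹ i j = ∑' k : ℕ, (Dm ^ k) i j) ∧
      (∀ i j, 0 ≤ (1 - Dm)⁻¹ i j) ∧
      spectralRadius ℂ ((A + B * (1 - Dm)⁻¹ * C).map (algebraMap ℝ ℂ)) ≤
        spectralRadius ℂ ((Matrix.fromBlocks A B C Dm).map (algebraMap ℝ ℂ)) :=
  stmt_12_general A B C Dm hA hB hC hD hN
end

section
/- Stability of the restricted eigenvalue property under entrywise perturbation (Proposition 7.11): Let U, V ∈ ℝ^{Φ×Φ}, η > 0, c > 0, s ∈ ℕ and ε > 0. If U satisfies RE(η,c,s) and |U_{ij} − V_{ij}| ≤ ε for all i, j ∈ Φ, then V satisfies RE(η − ε(c+1)²s, c, s). -/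
open scoped BigOperators
open Matrix

/-- The restricted eigenvalue property `RE(η, c, s)`. -/
def RestrictedEigenvalue {Φ : Type*} [Fintype Φ] [DecidableEq Φ]
    (U : Matrix Φ Φ ℝ) (η c : ℝ) (s : ℕ) : Prop :=
  ∀ (a : Φ → ℝ) (J : Finset Φ), J.card ≤ s →
    (∑ φ ∈ Jᶜ, |a φ|) ≤ c * ∑ φ ∈ J, |a φ| →
    η * (∑ φ ∈ J, a φ ^ 2) ≤ a ⬝ᵥ U.mulVec a

/-!
The quadratic forms of `U` and `V` differ by at most `ε |a|₁²`, and on the cone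
`|a_{Jᶜ}|₁ ≤ c |a_J|₁` with `card J ≤ s` Cauchy–Schwarz gives
`|a|₁ ≤ (c + 1) |a_J|₁ ≤ (c + 1) √s ‖a_J‖`.
-/

theorem Matrix.abs_dotProduct_mulVec_self_le {ι : Type*} [Fintype ι] (W : Matrix ι ι ℝ) {ε : ℝ}
    (hW : ∀ i j, |W i j| ≤ ε) (a : ι → ℝ) :
    |a ⬝ᵥ W *ᵥ a| ≤ ε * (∑ i, |a i|) ^ 2 := by
  calc |a ⬝ᵥ W *ᵥ a| = |∑ i, ∑ j, a i * (W i j * a j)| := by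
        simp only [dotProduct, mulVec, Finset.mul_sum]
    _ ≤ ∑ i, ∑ j, |a i| * (ε * |a j|) := by
        refine (Finset.abs_sum_le_sum_abs _ _).trans (Finset.sum_le_sum fun i _ => ?_)
        refine (Finset.abs_sum_le_sum_abs _ _).trans (Finset.sum_le_sum fun j _ => ?_)
        rw [abs_mul, abs_mul]
        gcongr
        exact hW i j
    _ = ε * (∑ i, |a i|) ^ 2 := by
        rw [sq, Finset.sum_mul_sum, Finset.mul_sum]
        refine Finset.sum_congr rfl fun i _ => ?_
        rw [Finset.mul_sum]
        refine Finset.sum_congr rfl fun j _ => ?_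
        ring

theorem sq_sum_abs_le_of_sum_compl_le {ι : Type*} [Fintype ι] [DecidableEq ι] {a : ι → ℝ}
    {J : Finset ι} {c : ℝ} {s : ℕ} (hJ : J.card ≤ s)
    (hcone : ∑ i ∈ Jᶜ, |a i| ≤ c * ∑ i ∈ J, |a i|) :
    (∑ i, |a i|) ^ 2 ≤ (c + 1) ^ 2 * s * ∑ i ∈ J, a i ^ 2 := by
  have hsplit : ∑ i, |a i| ≤ (c + 1) * ∑ i ∈ J, |a i| := by
    rw [← Finset.sum_add_sum_compl J]
    linarith
  have hcs : (∑ i ∈ J, |a i|) ^ 2 ≤ J.card * ∑ i ∈ J, a i ^ 2 := by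
    simpa only [sq_abs] using sq_sum_le_card_mul_sum_sq (s := J) (f := fun i => |a i|)
  calc (∑ i, |a i|) ^ 2 ≤ ((c + 1) * ∑ i ∈ J, |a i|) ^ 2 := by gcongr
    _ ≤ (c + 1) ^ 2 * (J.card * ∑ i ∈ J, a i ^ 2) := by rw [mul_pow]; gcongr
    _ ≤ (c + 1) ^ 2 * s * ∑ i ∈ J, a i ^ 2 := by rw [mul_assoc]; gcongr

theorem RestrictedEigenvalue.of_abs_sub_le {Φ : Type*} [Fintype Φ] [DecidableEq Φ]
    {U V : Matrix Φ Φ ℝ} {η c ε : ℝ} {s : ℕ} (hε : 0 ≤ ε) (hU : RestrictedEigenvalue U η c s)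
    (hUV : ∀ i j, |U i j - V i j| ≤ ε) :
    RestrictedEigenvalue V (η - ε * (c + 1) ^ 2 * s) c s := by
  intro a J hJ hcone
  have hpert : |a ⬝ᵥ (U - V) *ᵥ a| ≤ ε * (∑ i, |a i|) ^ 2 :=
    (U - V).abs_dotProduct_mulVec_self_le hUV a
  rw [sub_mulVec, dotProduct_sub] at hpert
  have hl1 := mul_le_mul_of_nonneg_left (sq_sum_abs_le_of_sum_compl_le hJ hcone) hε
  linarith [hU a J hJ hcone, (abs_le.mp hpert).2]

theorem stmt_16_general
    {Φ : Type*} [Fintype Φ] [DecidableEq Φ]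
    (U V : Matrix Φ Φ ℝ) (η c ε : ℝ) (s : ℕ)
    (hε : 0 < ε)
    (hU : RestrictedEigenvalue U η c s)
    (hUV : ∀ i j, |U i j - V i j| ≤ ε) :
    RestrictedEigenvalue V (η - ε * (c + 1) ^ 2 * s) c s :=
  hU.of_abs_sub_le hε.le hUV

/-- **Proposition 7.11.** Stability of the restricted eigenvalue property under
entrywise perturbation. -/
theorem stmt_16
    {Φ : Type*} [Fintype Φ] [Nonempty Φ] [DecidableEq Φ]
    (U V : Matrix Φ Φ ℝ) (η c ε : ℝ) (s : ℕ)
    (hη : 0 < η) (hc : 0 < c) (hε : 0 < ε)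
    (hU : RestrictedEigenvalue U η c s)
    (hUV : ∀ i j, |U i j - V i j| ≤ ε) :
    RestrictedEigenvalue V (η - ε * (c + 1) ^ 2 * s) c s :=
  stmt_16_general U V η c ε s hε hU hUV
end
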